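/- arXiv:2505.09942 — 3 statements merged into one kernel-verified Lean document; each statement's English description precedes it below -/
import Mathlib

section
/- Over-identification (Corollary 1): under Assumptions SO, NA, and DDD-CPT, for every g ∈ 𝒢_trt and every t with g ≤ t ≤ T, let 𝒢_c^{g,t} = {g_c ∈ 𝒮 : g_c > max{g,t}}; then for any real weights (w_{g_c})_{g_c ∈ 𝒢_c^{g,t}} with Σ_{g_c ∈ 𝒢_c^{g,t}} w_{g_c} = 1, one has ATT(g,t) = Σ_{g_c ∈ 𝒢_c^{g,t}} w_{g_c}·ATT_dr,g_c(g,t). -/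
open MeasureTheory ProbabilityTheory

namespace TripleDiff

/-- A staggered triple-differences (DDD) setup: a probability space carrying an
enabling-group variable `S` with values in a finite set `𝒮 ⊆ {2,…,T} ∪ {∞}`
(`∞` is coded as `⊤ : ℕ∞`), an eligibility indicator `Q ∈ {0,1}`, covariates
`X ∈ ℝ^d`, and integrable potential outcomes `Y_t(g)`, with every cell
`{S = g, Q = q}` having positive probability. -/
structure Setup (Ω : Type*) [MeasurableSpace Ω] (d : ℕ) where
  /-- the underlying probability measure -/
  μ : Measure Ω
  isProb : IsProbabilityMeasure μ
  /-- the number of time periods -/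
  T : ℕ
  hT : 2 ≤ T
  /-- the (finite) support of the enabling variable -/
  𝒮 : Finset ℕ∞
  h𝒮 : ∀ g ∈ 𝒮, g ≠ ⊤ → ∃ n : ℕ, 2 ≤ n ∧ n ≤ T ∧ g = (n : ℕ∞)
  htop : (⊤ : ℕ∞) ∈ 𝒮
  /-- enabling group: first period at which treatment is enabled -/
  S : Ω → ℕ∞
  hS : Measurable S
  hSmem : ∀ ω, S ω ∈ 𝒮
  /-- eligibility indicator -/
  Q : Ω → ℕ
  hQ : Measurable Q
  hQval : ∀ ω, Q ω ≤ 1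
  /-- covariates -/
  X : Ω → Fin d → ℝ
  hX : Measurable X
  /-- potential outcomes `Y_t(g)` -/
  Ypo : ℕ∞ → ℕ → Ω → ℝ
  hYpo : ∀ g ∈ 𝒮, ∀ t : ℕ, 1 ≤ t → t ≤ T → Integrable (Ypo g t) μ
  hcells : ∀ g ∈ 𝒮, ∀ q ≤ 1, 0 < μ {ω | S ω = g ∧ Q ω = q}

namespace Setup

variable {Ω : Type*} [MeasurableSpace Ω] {d : ℕ} (E : Setup Ω d)

/-- the cell `{S = g, Q = q}` -/
def cell (g : ℕ∞) (q : ℕ) : Set Ω := {ω | E.S ω = g ∧ E.Q ω = q}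

/-- first treatment period: `G = S` if `Q = 1` and `G = ∞` if `Q = 0` -/
def G (ω : Ω) : ℕ∞ := if E.Q ω = 1 then E.S ω else ⊤

/-- observed outcome `Y_t = Σ_g 1{G = g} Y_t(g)` -/
def Yobs (t : ℕ) (ω : Ω) : ℝ := E.Ypo (E.G ω) t ω

/-- the σ-algebra generated by the covariates `X` -/
def mX : MeasurableSpace Ω := MeasurableSpace.comap E.X inferInstance

/-- conditional cell probability `P(S = g, Q = q | X)` given `σ(X)` -/
noncomputable def pX (g : ℕ∞) (q : ℕ) : Ω → ℝ :=
  (E.μ)[(E.cell g q).indicator (fun _ => (1 : ℝ)) | E.mX]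

/-- group-time average treatment effect `ATT(g,t) = E[Y_t(g) − Y_t(∞) | S = g, Q = 1]` -/
noncomputable def ATT (g t : ℕ) : ℝ :=
  ∫ ω, (E.Ypo (g : ℕ∞) t ω - E.Ypo ⊤ t ω) ∂((E.μ)[|E.cell (g : ℕ∞) 1])

/-- outcome-regression nuisance `m^{g',q'}(X) = E[Y_t − Y_{g−1} | S = g', Q = q', X]`,
for the fixed pair `(g,t)` -/
noncomputable def mReg (g t : ℕ) (g' : ℕ∞) (q' : ℕ) : Ω → ℝ :=
  ((E.μ)[|E.cell g' q'])[fun ω => E.Yobs t ω - E.Yobs (g - 1) ω | E.mX]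

/-- treated weight `w_trt = 1{S = g, Q = 1} / E[1{S = g, Q = 1}]` -/
noncomputable def wTrt (g : ℕ) : Ω → ℝ := fun ω =>
  (E.cell (g : ℕ∞) 1).indicator (fun _ => (1 : ℝ)) ω / (E.μ (E.cell (g : ℕ∞) 1)).toReal

/-- unnormalized comparison (odds) weight `1{S = g', Q = q'}·p^{g,1}(X)/p^{g',q'}(X)` -/
noncomputable def oddsW (g : ℕ) (g' : ℕ∞) (q' : ℕ) : Ω → ℝ := fun ω =>
  (E.cell g' q').indicator (fun _ => (1 : ℝ)) ω * E.pX (g : ℕ∞) 1 ω / E.pX g' q' ω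

/-- normalized comparison weight `w_{g',q'}` -/
noncomputable def wComp (g : ℕ) (g' : ℕ∞) (q' : ℕ) : Ω → ℝ := fun ω =>
  E.oddsW g g' q' ω / ∫ ω', E.oddsW g g' q' ω' ∂E.μ

/-- doubly robust DDD estimand `ATT_dr,g_c(g,t)` with comparison group `g_c` -/
noncomputable def ATTdr (g t : ℕ) (gc : ℕ∞) : ℝ :=
  (∫ ω, (E.wTrt g ω - E.wComp g (g : ℕ∞) 0 ω) *
      (E.Yobs t ω - E.Yobs (g - 1) ω - E.mReg g t (g : ℕ∞) 0 ω) ∂E.μ)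
  + (∫ ω, (E.wTrt g ω - E.wComp g gc 1 ω) *
      (E.Yobs t ω - E.Yobs (g - 1) ω - E.mReg g t gc 1 ω) ∂E.μ)
  - (∫ ω, (E.wTrt g ω - E.wComp g gc 0 ω) *
      (E.Yobs t ω - E.Yobs (g - 1) ω - E.mReg g t gc 0 ω) ∂E.μ)

/-- Assumption SO (strong overlap): there is `ε > 0` with
`P(S = g, Q = q | X) > ε` a.s. for every cell. -/
def StrongOverlap : Prop :=
  ∃ ε > (0 : ℝ), ∀ g ∈ E.𝒮, ∀ q ≤ 1, ∀ᵐ ω ∂E.μ, ε < E.pX g q ω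

/-- Assumption NA (no anticipation): for every treated group `g` and every
pre-treatment period `t < g`,
`E[Y_t(g) | S = g, Q = 1, X] = E[Y_t(∞) | S = g, Q = 1, X]` a.s. -/
def NoAnticipation : Prop :=
  ∀ g : ℕ, (g : ℕ∞) ∈ E.𝒮 → ∀ t : ℕ, 1 ≤ t → t < g →
    ((E.μ)[|E.cell (g : ℕ∞) 1])[E.Ypo (g : ℕ∞) t | E.mX]
      =ᵐ[E.μ] ((E.μ)[|E.cell (g : ℕ∞) 1])[E.Ypo ⊤ t | E.mX]

/-- Assumption DDD-CPT (conditional DDD parallel trends): for each treated group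
`g`, each `g' ∈ 𝒮` and period `t` with `t ≥ g` and `g' > max{g,t}`, a.s.
`E[ΔY_t(∞)|S=g,Q=1,X] − E[ΔY_t(∞)|S=g,Q=0,X]
  = E[ΔY_t(∞)|S=g',Q=1,X] − E[ΔY_t(∞)|S=g',Q=0,X]`. -/
def ParallelTrends : Prop :=
  ∀ g : ℕ, (g : ℕ∞) ∈ E.𝒮 → ∀ g' ∈ E.𝒮, ∀ t : ℕ, g ≤ t → t ≤ E.T →
    max (g : ℕ∞) (t : ℕ∞) < g' →
    (fun ω =>
        (((E.μ)[|E.cell (g : ℕ∞) 1])[fun ω' => E.Ypo ⊤ t ω' - E.Ypo ⊤ (t - 1) ω' | E.mX]) ω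
          - (((E.μ)[|E.cell (g : ℕ∞) 0])[fun ω' => E.Ypo ⊤ t ω' - E.Ypo ⊤ (t - 1) ω' | E.mX]) ω)
      =ᵐ[E.μ]
    (fun ω =>
        (((E.μ)[|E.cell g' 1])[fun ω' => E.Ypo ⊤ t ω' - E.Ypo ⊤ (t - 1) ω' | E.mX]) ω
          - (((E.μ)[|E.cell g' 0])[fun ω' => E.Ypo ⊤ t ω' - E.Ypo ⊤ (t - 1) ω' | E.mX]) ω)

end Setup

end TripleDiff
namespace TripleDiff

namespace Setup

variable {Ω : Type*} [MeasurableSpace Ω] {d : ℕ} (E : Setup Ω d)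

lemma sum_telescope' (F : ℕ → ℝ) {g t : ℕ} (hg : 1 ≤ g) (hgt : g ≤ t) :
    ∑ s ∈ Finset.Icc g t, (F s - F (s - 1)) = F t - F (g - 1) := by
  induction t, hgt using Nat.le_induction with
  | base => rw [Finset.Icc_self, Finset.sum_singleton]
  | succ n hn ih =>
      rw [Finset.sum_Icc_succ_top (by omega), ih]
      have : n + 1 - 1 = n := by omega
      rw [this]; ring

lemma cell_meas (g' : ℕ∞) (q' : ℕ) : MeasurableSet (E.cell g' q') := by
  have h : E.cell g' q' = E.S ⁻¹' {g'} ∩ E.Q ⁻¹' {q'} := by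
    ext ω; simp [Setup.cell]
  rw [h]
  exact (E.hS (measurableSet_singleton _)).inter (E.hQ (measurableSet_singleton _))

lemma measurable_G : Measurable E.G :=
  Measurable.ite (E.hQ (measurableSet_singleton 1)) E.hS measurable_const

lemma integrable_Yobs {s : ℕ} (h1 : 1 ≤ s) (hsT : s ≤ E.T) :
    Integrable (E.Yobs s) E.μ := by
  haveI : IsProbabilityMeasure E.μ := E.isProb
  have hG := E.measurable_G
  have hrep : E.Yobs s
      = fun ω => ∑ g' ∈ E.𝒮, ({ω' | E.G ω' = g'}.indicator (E.Ypo g' s)) ω := by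
    funext ω
    have hmem : E.G ω ∈ E.𝒮 := by
      unfold Setup.G; split
      · exact E.hSmem ω
      · exact E.htop
    have h0 : ∀ b ∈ E.𝒮, b ≠ E.G ω →
        ({ω' | E.G ω' = b}.indicator (E.Ypo b s)) ω = 0 :=
      fun b _ hb => Set.indicator_of_notMem (s := {ω' | E.G ω' = b}) (fun h => hb (Eq.symm h)) _
    have h1' : E.G ω ∉ E.𝒮 → ({ω' | E.G ω' = E.G ω}.indicator (E.Ypo (E.G ω) s)) ω = 0 :=
      fun h => absurd hmem h
    rw [Finset.sum_eq_single (E.G ω) h0 h1', Set.indicator_of_mem (show ω ∈ {ω' | E.G ω' = E.G ω} from rfl)]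
    rfl
  rw [hrep]
  apply integrable_finset_sum
  intro g' hg'
  exact (E.hYpo g' hg' s h1 hsT).indicator (hG (measurableSet_singleton _))

end Setup

end TripleDiff

namespace TripleDiffAux

variable {Ω : Type*} {m m0 : MeasurableSpace Ω}

lemma setIntegral_cond (μ : Measure Ω) {c : Set Ω} (hc : MeasurableSet c)
    {A : Set Ω} (hA : MeasurableSet A) (h : Ω → ℝ) :
    ∫ x in A, h x ∂(μ[|c]) = (μ c).toReal⁻¹ * ∫ x in A, c.indicator h x ∂μ := by
  rw [ProbabilityTheory.cond, Measure.restrict_smul, integral_smul_measure,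
    Measure.restrict_restrict hA, setIntegral_indicator hc, ENNReal.toReal_inv, smul_eq_mul]

lemma integral_cond (μ : Measure Ω) {c : Set Ω} (hc : MeasurableSet c) (h : Ω → ℝ) :
    ∫ x, h x ∂(μ[|c]) = (μ c).toReal⁻¹ * ∫ x, c.indicator h x ∂μ := by
  rw [ProbabilityTheory.cond, integral_smul_measure, ← integral_indicator hc,
    ENNReal.toReal_inv, smul_eq_mul]

lemma integral_indicator_cond (μ : Measure Ω) {c : Set Ω} (hc : MeasurableSet c)
    (hc0 : μ c ≠ 0) (hcT : μ c ≠ ⊤) (h : Ω → ℝ) :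
    ∫ x, c.indicator h x ∂μ = (μ c).toReal * ∫ x, h x ∂(μ[|c]) := by
  rw [integral_cond μ hc h]
  have : (μ c).toReal ≠ 0 := ENNReal.toReal_ne_zero.mpr ⟨hc0, hcT⟩
  field_simp

lemma integrable_cond {μ : Measure Ω} {c : Set Ω} (hc0 : μ c ≠ 0) {f : Ω → ℝ}
    (hf : Integrable f μ) : Integrable f (μ[|c]) := by
  rw [ProbabilityTheory.cond]
  exact (hf.restrict).smul_measure (ENNReal.inv_ne_top.mpr hc0)

lemma integrable_indicator_of_cond {μ : Measure Ω} {c : Set Ω} (hc : MeasurableSet c)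
    (hc0 : μ c ≠ 0) (hcT : μ c ≠ ⊤) {f : Ω → ℝ} (hf : Integrable f (μ[|c])) :
    Integrable (c.indicator f) μ := by
  rw [integrable_indicator_iff hc]
  have hr : μ.restrict c = (μ c) • (μ[|c]) := by
    rw [ProbabilityTheory.cond, smul_smul, ENNReal.mul_inv_cancel hc0 hcT, one_smul]
  rw [IntegrableOn, hr]
  exact hf.smul_measure hcT

lemma ae_cond {μ : Measure Ω} {c : Set Ω} {p : Ω → Prop} (h : ∀ᵐ ω ∂μ, p ω) :
    ∀ᵐ ω ∂(μ[|c]), p ω :=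
  cond_absolutelyContinuous.ae_le h

lemma ae_cond_mem {μ : Measure Ω} {c : Set Ω} (hc : MeasurableSet c) :
    ∀ᵐ ω ∂(μ[|c]), ω ∈ c := by
  rw [ProbabilityTheory.cond]
  exact Measure.ae_smul_measure (ae_restrict_mem hc) _

lemma integral_mul_eq_zero (hm : m ≤ m0) (μ : Measure Ω) [IsFiniteMeasure μ]
    {h k : Ω → ℝ} (hh : StronglyMeasurable[m] h) (hk : Integrable k μ)
    (hhk : Integrable (fun ω => h ω * k ω) μ) (hk0 : μ[k|m] =ᵐ[μ] 0) :
    ∫ ω, h ω * k ω ∂μ = 0 := by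
  have h1 : μ[fun ω => h ω * k ω|m] =ᵐ[μ] fun ω => h ω * (μ[k|m]) ω :=
    condExp_mul_of_stronglyMeasurable_left hh hhk hk
  have h2 : ∫ ω, h ω * k ω ∂μ = ∫ ω, (μ[fun ω => h ω * k ω|m]) ω ∂μ :=
    (integral_condExp hm).symm
  rw [h2, integral_congr_ae (h1.trans ?_), integral_zero]
  filter_upwards [hk0] with ω hω
  simp [hω]

lemma bridge (hm : m ≤ m0) (μ : Measure Ω) [IsProbabilityMeasure μ] {c : Set Ω}
    (hc : MeasurableSet c) (hc0 : μ c ≠ 0) {f : Ω → ℝ} (hf : Integrable f μ) :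
    μ[c.indicator f|m] =ᵐ[μ]
      fun ω => (μ[c.indicator (fun _ => (1:ℝ))|m]) ω * ((μ[|c])[f|m]) ω := by
  haveI : IsProbabilityMeasure (μ[|c]) := cond_isProbabilityMeasure hc0
  set ν := μ[|c] with hν
  set r : Ω → ℝ := ν[f|m] with hr
  have hcT : μ c ≠ ⊤ := measure_ne_top μ c
  have hPne : (μ c).toReal ≠ 0 := ENNReal.toReal_ne_zero.mpr ⟨hc0, hcT⟩
  have hr_sm : StronglyMeasurable[m] r := stronglyMeasurable_condExp
  have hr_int : Integrable r ν := integrable_condExp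
  have hcr_int : Integrable (c.indicator r) μ :=
    integrable_indicator_of_cond hc hc0 hcT hr_int
  have hfc_int : Integrable (c.indicator f) μ := hf.indicator hc
  have hfund : (fun ω => r ω * c.indicator (fun _ => (1:ℝ)) ω) = c.indicator r := by
    funext ω
    by_cases hω : ω ∈ c <;>
      simp [Set.indicator_of_mem, Set.indicator_of_notMem, hω]
  have hind_int : Integrable (c.indicator (fun _ => (1:ℝ))) μ :=
    (integrable_const (1:ℝ)).indicator hc
  have hpull : μ[c.indicator r|m] =ᵐ[μ]
      fun ω => r ω * (μ[c.indicator (fun _ => (1:ℝ))|m]) ω := by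
    have h := condExp_mul_of_stronglyMeasurable_left (μ := μ) hr_sm
      (g := c.indicator (fun _ => (1:ℝ))) (by rw [show (r * c.indicator fun _ => (1:ℝ)) = fun ω => r ω * c.indicator (fun _ => (1:ℝ)) ω from rfl, hfund]; exact hcr_int) hind_int
    have : (r * c.indicator fun _ => (1:ℝ)) = c.indicator r := hfund
    rw [this] at h
    exact h
  have hkey : μ[c.indicator r|m] =ᵐ[μ] μ[c.indicator f|m] := by
    refine ae_eq_condExp_of_forall_setIntegral_eq hm hfc_int
      (fun s _ _ => integrable_condExp.integrableOn) (fun s hs hμs => ?_)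
      stronglyMeasurable_condExp.aestronglyMeasurable
    have hsm : MeasurableSet s := hm s hs
    rw [setIntegral_condExp hm hcr_int hs]
    have e1 : ∫ x in s, c.indicator r x ∂μ = (μ c).toReal * ∫ x in s, r x ∂ν := by
      rw [setIntegral_cond μ hc hsm r]; field_simp
    have e2 : ∫ x in s, r x ∂ν = ∫ x in s, f x ∂ν :=
      setIntegral_condExp hm (integrable_cond hc0 hf) hs
    have e3 : ∫ x in s, c.indicator f x ∂μ = (μ c).toReal * ∫ x in s, f x ∂ν := by
      rw [setIntegral_cond μ hc hsm f]; field_simp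
    rw [e1, e2, ← e3]
  refine (hkey.symm.trans hpull).trans (Filter.Eventually.of_forall fun ω => ?_)
  exact mul_comm _ _

lemma pullout (hm : m ≤ m0) (μ : Measure Ω) [IsFiniteMeasure μ] {c : Set Ω}
    (hc : MeasurableSet c) {r : Ω → ℝ} (hr : StronglyMeasurable[m] r)
    (hri : Integrable (c.indicator r) μ) :
    μ[c.indicator r|m] =ᵐ[μ] fun ω => r ω * (μ[c.indicator (fun _ => (1:ℝ))|m]) ω := by
  have hfund : (r * c.indicator fun _ => (1:ℝ)) = c.indicator r := by
    funext ω
    by_cases hω : ω ∈ c <;>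
      simp [Set.indicator_of_mem, Set.indicator_of_notMem, hω]
  have h := condExp_mul_of_stronglyMeasurable_left (μ := μ) hr
    (g := c.indicator fun _ => (1:ℝ)) (by rw [hfund]; exact hri)
    ((integrable_const (1:ℝ)).indicator hc)
  rw [hfund] at h
  exact h

end TripleDiffAux
namespace TripleDiff

namespace Setup

variable {Ω : Type*} [MeasurableSpace Ω] {d : ℕ}

theorem ATTdr_eq_ATT (E : Setup Ω d)
    (hSO : E.StrongOverlap) (hNA : E.NoAnticipation) (hPT : E.ParallelTrends)
    (g : ℕ) (hg : (g : ℕ∞) ∈ E.𝒮) (t : ℕ) (hgt : g ≤ t) (htT : t ≤ E.T)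
    (gc : ℕ∞) (hgcS : gc ∈ E.𝒮) (hgcmax : max (g : ℕ∞) (t : ℕ∞) < gc) :
    E.ATTdr g t gc = E.ATT g t := by
  classical
  haveI : IsProbabilityMeasure E.μ := E.isProb
  obtain ⟨ε, hε, hSO⟩ := hSO
  have hm : E.mX ≤ ‹MeasurableSpace Ω› := E.hX.comap_le
  -- bounds on g
  obtain ⟨n, hn2, hnT, hgn⟩ := E.h𝒮 _ hg (by simp)
  have hgn' : g = n := by exact_mod_cast hgn
  have hg2 : 2 ≤ g := hgn' ▸ hn2
  have hgT : g ≤ E.T := hgn' ▸ hnT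
  -- basic integrability
  have hYtop : ∀ s : ℕ, 1 ≤ s → s ≤ E.T → Integrable (E.Ypo ⊤ s) E.μ :=
    fun s h1 h2 => E.hYpo ⊤ E.htop s h1 h2
  have hΔ : Integrable (fun ω => E.Yobs t ω - E.Yobs (g - 1) ω) E.μ :=
    (E.integrable_Yobs (by omega) htT).sub (E.integrable_Yobs (by omega) (by omega))
  have hD : Integrable (fun ω => E.Ypo ⊤ t ω - E.Ypo ⊤ (g - 1) ω) E.μ :=
    (hYtop t (by omega) htT).sub (hYtop (g - 1) (by omega) (by omega))
  -- cell facts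
  have hmeas : ∀ (g' : ℕ∞) (q' : ℕ), MeasurableSet (E.cell g' q') := E.cell_meas
  have hne0 : ∀ g' ∈ E.𝒮, ∀ q' ≤ 1, E.μ (E.cell g' q') ≠ 0 :=
    fun g' h q' hq => (E.hcells g' h q' hq).ne'
  have hneT : ∀ (g' : ℕ∞) (q' : ℕ), E.μ (E.cell g' q') ≠ ⊤ := fun _ _ => measure_ne_top _ _
  have hne0' : E.μ (E.cell (g : ℕ∞) 1) ≠ 0 := hne0 _ hg 1 le_rfl
  have hP : (E.μ (E.cell (g : ℕ∞) 1)).toReal ≠ 0 :=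
    ENNReal.toReal_ne_zero.mpr ⟨hne0', hneT _ _⟩
  -- pX facts
  have hpX_sm : ∀ (g' : ℕ∞) (q' : ℕ), StronglyMeasurable[E.mX] (E.pX g' q') :=
    fun _ _ => stronglyMeasurable_condExp
  have hpX_nonneg : ∀ (g' : ℕ∞) (q' : ℕ), ∀ᵐ ω ∂E.μ, 0 ≤ E.pX g' q' ω := fun g' q' =>
    condExp_nonneg (Filter.Eventually.of_forall fun ω =>
      Set.indicator_nonneg (fun _ _ => zero_le_one) ω)
  have hpX_le1 : ∀ (g' : ℕ∞) (q' : ℕ), ∀ᵐ ω ∂E.μ, E.pX g' q' ω ≤ 1 := by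
    intro g' q'
    have h1 : (E.μ)[(fun _ => (1:ℝ))|E.mX] = fun _ => (1:ℝ) := condExp_const (μ := E.μ) hm (1:ℝ)
    have h2 := condExp_mono (μ := E.μ) (m := E.mX)
      ((integrable_const (1:ℝ)).indicator (hmeas g' q')) (integrable_const (1:ℝ))
      (Filter.Eventually.of_forall fun ω =>
        Set.indicator_le_self' (fun _ _ => zero_le_one) ω)
    rw [h1] at h2
    exact h2
  have hpX_pos : ∀ g' ∈ E.𝒮, ∀ q' ≤ 1, ∀ᵐ ω ∂E.μ, ε < E.pX g' q' ω := hSO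
  -- bridge, specialized
  have hbr : ∀ g' ∈ E.𝒮, ∀ q' ≤ 1, ∀ (f : Ω → ℝ), Integrable f E.μ →
      (E.μ)[(E.cell g' q').indicator f|E.mX] =ᵐ[E.μ]
        fun ω => E.pX g' q' ω * (((E.μ)[|E.cell g' q'])[f|E.mX]) ω :=
    fun g' h q' hq f hf => TripleDiffAux.bridge hm E.μ (hmeas g' q') (hne0 g' h q' hq) hf
  -- pullout, specialized
  have hpull : ∀ (g' : ℕ∞) (q' : ℕ), ∀ (r : Ω → ℝ), StronglyMeasurable[E.mX] r →
      Integrable ((E.cell g' q').indicator r) E.μ →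
      (E.μ)[(E.cell g' q').indicator r|E.mX] =ᵐ[E.μ]
        fun ω => r ω * E.pX g' q' ω :=
    fun g' q' r hr hri => TripleDiffAux.pullout hm E.μ (hmeas g' q') hr hri
  -- (A) bridge applied to the observed difference
  have hA : ∀ g' ∈ E.𝒮, ∀ q' ≤ 1,
      (E.μ)[(E.cell g' q').indicator (fun ω => E.Yobs t ω - E.Yobs (g - 1) ω)|E.mX] =ᵐ[E.μ]
        fun ω => E.pX g' q' ω * E.mReg g t g' q' ω :=
    fun g' h q' hq => hbr g' h q' hq _ hΔ
  -- (B) the outcome regressions are integrable w.r.t. μ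
  have hBint : ∀ g' ∈ E.𝒮, ∀ q' ≤ 1, Integrable (E.mReg g t g' q') E.μ := by
    intro g' h q' hq
    refine Integrable.mono'
      ((integrable_condExp (m := E.mX)
        (f := (E.cell g' q').indicator (fun ω => E.Yobs t ω - E.Yobs (g - 1) ω))).norm.const_mul
        ε⁻¹)
      ((stronglyMeasurable_condExp.mono hm).aestronglyMeasurable) ?_
    filter_upwards [hA g' h q' hq, hpX_pos g' h q' hq] with ω h1 h2
    have hp : 0 < E.pX g' q' ω := lt_trans hε h2
    have hval : ‖E.mReg g t g' q' ω‖
        = ‖((E.μ)[(E.cell g' q').indicator (fun ω => E.Yobs t ω - E.Yobs (g - 1) ω)|E.mX]) ω‖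
          / E.pX g' q' ω := by
      rw [h1, norm_mul, Real.norm_eq_abs (E.pX g' q' ω), abs_of_pos hp,
        mul_div_cancel_left₀ _ hp.ne']
    rw [hval, div_eq_inv_mul]
    exact mul_le_mul_of_nonneg_right (inv_anti₀ hε h2.le) (norm_nonneg _)

  -- (C) each doubly robust term reduces to an integral over the treated cell
  have hC : ∀ g' ∈ E.𝒮, ∀ q' ≤ 1,
      ∫ ω, (E.wTrt g ω - E.wComp g g' q' ω) *
          (E.Yobs t ω - E.Yobs (g - 1) ω - E.mReg g t g' q' ω) ∂E.μ
        = ∫ ω, (E.Yobs t ω - E.Yobs (g - 1) ω - E.mReg g t g' q' ω)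
            ∂((E.μ)[|E.cell (g : ℕ∞) 1]) := by
    intro g' hS' q' hq'
    have hFint : Integrable
        (fun ω => E.Yobs t ω - E.Yobs (g - 1) ω - E.mReg g t g' q' ω) E.μ :=
      hΔ.sub (hBint g' hS' q' hq')
    -- the treated-weight part
    have hw1 : (fun ω => E.wTrt g ω *
          (E.Yobs t ω - E.Yobs (g - 1) ω - E.mReg g t g' q' ω))
        = fun ω => ((E.cell (g : ℕ∞) 1).indicator
            (fun ω' => E.Yobs t ω' - E.Yobs (g - 1) ω' - E.mReg g t g' q' ω') ω)
              / (E.μ (E.cell (g : ℕ∞) 1)).toReal := by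
      funext ω
      unfold Setup.wTrt
      by_cases hω : ω ∈ E.cell (g : ℕ∞) 1
      · rw [Set.indicator_of_mem hω, Set.indicator_of_mem hω]; ring
      · rw [Set.indicator_of_notMem hω, Set.indicator_of_notMem hω]; ring
    have hw1int : Integrable (fun ω => E.wTrt g ω *
        (E.Yobs t ω - E.Yobs (g - 1) ω - E.mReg g t g' q' ω)) E.μ := by
      rw [hw1]; exact (hFint.indicator (hmeas _ _)).div_const _
    -- comparison-weight part
    have hkint : Integrable ((E.cell g' q').indicator
        (fun ω' => E.Yobs t ω' - E.Yobs (g - 1) ω' - E.mReg g t g' q' ω')) E.μ :=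
      hFint.indicator (hmeas _ _)
    have hw2 : (fun ω => E.wComp g g' q' ω *
          (E.Yobs t ω - E.Yobs (g - 1) ω - E.mReg g t g' q' ω))
        = fun ω => ((E.pX (g : ℕ∞) 1 ω / E.pX g' q' ω) *
            (E.cell g' q').indicator
              (fun ω' => E.Yobs t ω' - E.Yobs (g - 1) ω' - E.mReg g t g' q' ω') ω)
              / (∫ ω', E.oddsW g g' q' ω' ∂E.μ) := by
      funext ω
      unfold Setup.wComp Setup.oddsW
      by_cases hω : ω ∈ E.cell g' q'
      · rw [Set.indicator_of_mem hω, Set.indicator_of_mem hω]; ring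
      · rw [Set.indicator_of_notMem hω, Set.indicator_of_notMem hω]; ring
    have hhsm : StronglyMeasurable[E.mX]
        (fun ω => E.pX (g : ℕ∞) 1 ω / E.pX g' q' ω) :=
      ((hpX_sm (g : ℕ∞) 1).measurable.div (hpX_sm g' q').measurable).stronglyMeasurable
    have hhk_int : Integrable (fun ω => (E.pX (g : ℕ∞) 1 ω / E.pX g' q' ω) *
        (E.cell g' q').indicator
          (fun ω' => E.Yobs t ω' - E.Yobs (g - 1) ω' - E.mReg g t g' q' ω') ω) E.μ := by
      refine Integrable.mono' (hkint.norm.const_mul ε⁻¹)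
        (((hhsm.mono hm).aestronglyMeasurable).mul hkint.1) ?_
      filter_upwards [hpX_le1 (g : ℕ∞) 1, hpX_pos g' hS' q' hq',
        hpX_pos (g : ℕ∞) hg 1 le_rfl] with ω h1 h2 h3
      have hpc : 0 < E.pX g' q' ω := lt_trans hε h2
      have hp1 : 0 < E.pX (g : ℕ∞) 1 ω := lt_trans hε h3
      rw [norm_mul]
      have hh : ‖E.pX (g : ℕ∞) 1 ω / E.pX g' q' ω‖ ≤ ε⁻¹ := by
        rw [Real.norm_eq_abs, abs_div, abs_of_pos hp1, abs_of_pos hpc]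
        calc E.pX (g : ℕ∞) 1 ω / E.pX g' q' ω ≤ 1 / E.pX g' q' ω := by
              gcongr
            _ ≤ 1 / ε := one_div_le_one_div_of_le hε h2.le
            _ = ε⁻¹ := one_div ε
      exact mul_le_mul_of_nonneg_right hh (norm_nonneg _)
    have hw2int : Integrable (fun ω => E.wComp g g' q' ω *
        (E.Yobs t ω - E.Yobs (g - 1) ω - E.mReg g t g' q' ω)) E.μ := by
      rw [hw2]; exact hhk_int.div_const _
    -- conditional mean zero of the indicator residual
    have hk0 : (E.μ)[(E.cell g' q').indicator
        (fun ω' => E.Yobs t ω' - E.Yobs (g - 1) ω' - E.mReg g t g' q' ω')|E.mX]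
          =ᵐ[E.μ] 0 := by
      have hmcind : Integrable ((E.cell g' q').indicator (E.mReg g t g' q')) E.μ :=
        (hBint g' hS' q' hq').indicator (hmeas _ _)
      have hdec : (E.cell g' q').indicator
          (fun ω' => E.Yobs t ω' - E.Yobs (g - 1) ω' - E.mReg g t g' q' ω')
          = (E.cell g' q').indicator (fun ω' => E.Yobs t ω' - E.Yobs (g - 1) ω')
            - (E.cell g' q').indicator (E.mReg g t g' q') := by
        funext ω
        by_cases hω : ω ∈ E.cell g' q' <;>
          simp [Set.indicator_of_mem, Set.indicator_of_notMem, hω]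
      have h1 := condExp_sub (m := E.mX) (hΔ.indicator (hmeas g' q')) hmcind
      have h2 := hpull g' q' (E.mReg g t g' q') stronglyMeasurable_condExp hmcind
      have h3 := hA g' hS' q' hq'
      rw [hdec]
      filter_upwards [h1, h2, h3] with ω e1 e2 e3
      have : ((E.μ)[(E.cell g' q').indicator (fun ω' => E.Yobs t ω' - E.Yobs (g - 1) ω')
          - (E.cell g' q').indicator (E.mReg g t g' q')|E.mX]) ω
          = E.pX g' q' ω * E.mReg g t g' q' ω
            - E.mReg g t g' q' ω * E.pX g' q' ω := by
        rw [e1, Pi.sub_apply, e3, e2]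
      rw [this]; ring_nf; rfl
    have hzero : ∫ ω, (E.pX (g : ℕ∞) 1 ω / E.pX g' q' ω) *
        (E.cell g' q').indicator
          (fun ω' => E.Yobs t ω' - E.Yobs (g - 1) ω' - E.mReg g t g' q' ω') ω ∂E.μ = 0 :=
      TripleDiffAux.integral_mul_eq_zero hm E.μ hhsm hkint hhk_int hk0
    have hsplit : ∀ ω, (E.wTrt g ω - E.wComp g g' q' ω) *
        (E.Yobs t ω - E.Yobs (g - 1) ω - E.mReg g t g' q' ω)
        = E.wTrt g ω * (E.Yobs t ω - E.Yobs (g - 1) ω - E.mReg g t g' q' ω)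
          - E.wComp g g' q' ω * (E.Yobs t ω - E.Yobs (g - 1) ω - E.mReg g t g' q' ω) :=
      fun ω => by ring
    simp only [hsplit]
    rw [integral_sub hw1int hw2int]
    have e1 : ∫ ω, E.wTrt g ω *
        (E.Yobs t ω - E.Yobs (g - 1) ω - E.mReg g t g' q' ω) ∂E.μ
        = ∫ ω, (E.Yobs t ω - E.Yobs (g - 1) ω - E.mReg g t g' q' ω)
            ∂((E.μ)[|E.cell (g : ℕ∞) 1]) := by
      rw [hw1, integral_div,
        TripleDiffAux.integral_indicator_cond E.μ (hmeas (g : ℕ∞) 1) hne0' (hneT _ _)]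
      rw [mul_comm, mul_div_assoc, div_self hP, mul_one]
    have e2 : ∫ ω, E.wComp g g' q' ω *
        (E.Yobs t ω - E.Yobs (g - 1) ω - E.mReg g t g' q' ω) ∂E.μ = 0 := by
      rw [hw2, integral_div, hzero, zero_div]
    rw [e1, e2, sub_zero]

  -- integrability of one-period ∞-potential-outcome differences
  have hfint : ∀ s ∈ Finset.Icc g t,
      Integrable (fun ω' => E.Ypo ⊤ s ω' - E.Ypo ⊤ (s - 1) ω') E.μ := by
    intro s hs
    rw [Finset.mem_Icc] at hs
    exact (hYtop s (by omega) (by omega)).sub (hYtop (s - 1) (by omega) (by omega))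
  -- (sum) conditional expectation of the long difference telescopes, cell by cell
  have hsum : ∀ g' ∈ E.𝒮, ∀ q' ≤ 1, ∀ᵐ ω ∂E.μ,
      ((E.μ)[(E.cell g' q').indicator (fun ω' => E.Ypo ⊤ t ω' - E.Ypo ⊤ (g - 1) ω')|E.mX]) ω
        = ∑ s ∈ Finset.Icc g t, E.pX g' q' ω *
            (((E.μ)[|E.cell g' q'])[fun ω' => E.Ypo ⊤ s ω' - E.Ypo ⊤ (s - 1) ω'|E.mX]) ω := by
    intro g' hS' q' hq'
    have hindint : ∀ s ∈ Finset.Icc g t,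
        Integrable ((E.cell g' q').indicator
          (fun ω' => E.Ypo ⊤ s ω' - E.Ypo ⊤ (s - 1) ω')) E.μ :=
      fun s hs => (hfint s hs).indicator (hmeas _ _)
    have hDdec : (E.cell g' q').indicator (fun ω' => E.Ypo ⊤ t ω' - E.Ypo ⊤ (g - 1) ω')
        = ∑ s ∈ Finset.Icc g t, (E.cell g' q').indicator
            (fun ω' => E.Ypo ⊤ s ω' - E.Ypo ⊤ (s - 1) ω') := by
      funext ω
      rw [Finset.sum_apply]
      by_cases hω : ω ∈ E.cell g' q'
      · simp only [Set.indicator_of_mem hω]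
        exact (sum_telescope' (fun s => E.Ypo ⊤ s ω) (by omega) hgt).symm
      · simp [Set.indicator_of_notMem hω]
    have h1 : (E.μ)[(E.cell g' q').indicator
        (fun ω' => E.Ypo ⊤ t ω' - E.Ypo ⊤ (g - 1) ω')|E.mX] =ᵐ[E.μ]
        ∑ s ∈ Finset.Icc g t, (E.μ)[(E.cell g' q').indicator
          (fun ω' => E.Ypo ⊤ s ω' - E.Ypo ⊤ (s - 1) ω')|E.mX] := by
      rw [hDdec]
      exact condExp_finset_sum hindint _
    have h2 : ∀ᵐ ω ∂E.μ, ∀ s ∈ Finset.Icc g t,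
        ((E.μ)[(E.cell g' q').indicator
          (fun ω' => E.Ypo ⊤ s ω' - E.Ypo ⊤ (s - 1) ω')|E.mX]) ω
          = E.pX g' q' ω *
            (((E.μ)[|E.cell g' q'])[fun ω' => E.Ypo ⊤ s ω' - E.Ypo ⊤ (s - 1) ω'|E.mX]) ω :=
      (ae_ball_iff (Finset.Icc g t).countable_toSet).mpr
        (fun s hs => hbr g' hS' q' hq' _ (hfint s hs))
    filter_upwards [h1, h2] with ω e1 e2
    rw [e1, Finset.sum_apply]
    exact Finset.sum_congr rfl fun s hs => e2 s hs
  -- on cells where G = ∞, the observed long difference is the untreated one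
  have hobs : ∀ (g' : ℕ∞) (q' : ℕ), (∀ ω ∈ E.cell g' q', E.G ω = ⊤) →
      (E.cell g' q').indicator (fun ω' => E.Yobs t ω' - E.Yobs (g - 1) ω')
        = (E.cell g' q').indicator (fun ω' => E.Ypo ⊤ t ω' - E.Ypo ⊤ (g - 1) ω') := by
    intro g' q' hG
    funext ω
    by_cases hω : ω ∈ E.cell g' q'
    · rw [Set.indicator_of_mem hω, Set.indicator_of_mem hω]
      show E.Ypo (E.G ω) t ω - E.Ypo (E.G ω) (g - 1) ω = _
      rw [hG ω hω]
    · rw [Set.indicator_of_notMem hω, Set.indicator_of_notMem hω]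
  have hGzero : ∀ (g' : ℕ∞), ∀ ω ∈ E.cell g' 0, E.G ω = ⊤ := by
    intro g' ω hω
    obtain ⟨_, hq⟩ := hω
    unfold Setup.G
    rw [if_neg (by omega)]
  -- (mD) identification of p·m for the three comparison cells
  have hmD10 : (fun ω => E.pX (g : ℕ∞) 0 ω * E.mReg g t (g : ℕ∞) 0 ω) =ᵐ[E.μ]
      (E.μ)[(E.cell (g : ℕ∞) 0).indicator
        (fun ω' => E.Ypo ⊤ t ω' - E.Ypo ⊤ (g - 1) ω')|E.mX] := by
    have h := (hA (g : ℕ∞) hg 0 (by omega)).symm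
    rwa [hobs (g : ℕ∞) 0 (hGzero _)] at h
  have hmDc0 : (fun ω => E.pX gc 0 ω * E.mReg g t gc 0 ω) =ᵐ[E.μ]
      (E.μ)[(E.cell gc 0).indicator
        (fun ω' => E.Ypo ⊤ t ω' - E.Ypo ⊤ (g - 1) ω')|E.mX] := by
    have h := (hA gc hgcS 0 (by omega)).symm
    rwa [hobs gc 0 (hGzero _)] at h
  have hmDc1 : (fun ω => E.pX gc 1 ω * E.mReg g t gc 1 ω) =ᵐ[E.μ]
      (E.μ)[(E.cell gc 1).indicator
        (fun ω' => E.Ypo ⊤ t ω' - E.Ypo ⊤ (g - 1) ω')|E.mX] := by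
    by_cases hgctop : gc = ⊤
    · subst hgctop
      have h := (hA ⊤ hgcS 1 le_rfl).symm
      rwa [hobs ⊤ 1 (fun ω hω => by
        obtain ⟨hs, hq⟩ := hω
        unfold Setup.G
        rw [if_pos hq, hs])] at h
    · obtain ⟨n', hn'2, hn'T, hgc⟩ := E.h𝒮 gc hgcS hgctop
      subst hgc
      have htn' : t < n' := by
        have := lt_of_le_of_lt (le_max_right (g : ℕ∞) (t : ℕ∞)) hgcmax
        exact_mod_cast this
      have hYn't : Integrable (E.Ypo (n' : ℕ∞) t) E.μ := E.hYpo _ hgcS t (by omega) htT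
      have hYn'g : Integrable (E.Ypo (n' : ℕ∞) (g - 1)) E.μ :=
        E.hYpo _ hgcS (g - 1) (by omega) (by omega)
      have hYtt : Integrable (E.Ypo ⊤ t) E.μ := hYtop t (by omega) htT
      have hYtg : Integrable (E.Ypo ⊤ (g - 1)) E.μ := hYtop (g - 1) (by omega) (by omega)
      -- on the cell, the observed outcomes come from group n'
      have hind1 : (E.cell (n' : ℕ∞) 1).indicator
          (fun ω' => E.Yobs t ω' - E.Yobs (g - 1) ω')
          = (E.cell (n' : ℕ∞) 1).indicator (E.Ypo (n' : ℕ∞) t)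
            - (E.cell (n' : ℕ∞) 1).indicator (E.Ypo (n' : ℕ∞) (g - 1)) := by
        funext ω
        rw [Pi.sub_apply]
        by_cases hω : ω ∈ E.cell (n' : ℕ∞) 1
        · rw [Set.indicator_of_mem hω, Set.indicator_of_mem hω, Set.indicator_of_mem hω]
          obtain ⟨hs, hq⟩ := hω
          have hG : E.G ω = (n' : ℕ∞) := by unfold Setup.G; rw [if_pos hq, hs]
          show E.Ypo (E.G ω) t ω - E.Ypo (E.G ω) (g - 1) ω = _
          rw [hG]
        · rw [Set.indicator_of_notMem hω, Set.indicator_of_notMem hω,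
            Set.indicator_of_notMem hω]
          ring
      have hindD : (E.cell (n' : ℕ∞) 1).indicator
          (fun ω' => E.Ypo ⊤ t ω' - E.Ypo ⊤ (g - 1) ω')
          = (E.cell (n' : ℕ∞) 1).indicator (E.Ypo ⊤ t)
            - (E.cell (n' : ℕ∞) 1).indicator (E.Ypo ⊤ (g - 1)) := by
        funext ω
        rw [Pi.sub_apply]
        by_cases hω : ω ∈ E.cell (n' : ℕ∞) 1
        · rw [Set.indicator_of_mem hω, Set.indicator_of_mem hω, Set.indicator_of_mem hω]
        · rw [Set.indicator_of_notMem hω, Set.indicator_of_notMem hω,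
            Set.indicator_of_notMem hω]
          ring
      have hNAt := hNA n' hgcS t (by omega) htn'
      have hNAg := hNA n' hgcS (g - 1) (by omega) (by omega)
      have hbt := hbr (n' : ℕ∞) hgcS 1 le_rfl _ hYn't
      have hbg := hbr (n' : ℕ∞) hgcS 1 le_rfl _ hYn'g
      have hbtt := hbr (n' : ℕ∞) hgcS 1 le_rfl _ hYtt
      have hbtg := hbr (n' : ℕ∞) hgcS 1 le_rfl _ hYtg
      have h1 := hA (n' : ℕ∞) hgcS 1 le_rfl
      have h2 := condExp_sub (m := E.mX)
        (f := (E.cell (n' : ℕ∞) 1).indicator (E.Ypo (n' : ℕ∞) t))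
        (g := (E.cell (n' : ℕ∞) 1).indicator (E.Ypo (n' : ℕ∞) (g - 1)))
        (hYn't.indicator (hmeas _ _)) (hYn'g.indicator (hmeas _ _))
      have h3 := condExp_sub (m := E.mX)
        (f := (E.cell (n' : ℕ∞) 1).indicator (E.Ypo ⊤ t))
        (g := (E.cell (n' : ℕ∞) 1).indicator (E.Ypo ⊤ (g - 1)))
        (hYtt.indicator (hmeas _ _)) (hYtg.indicator (hmeas _ _))
      rw [hind1] at h1
      rw [← hindD] at h3
      filter_upwards [h1, h2, h3, hbt, hbg, hbtt, hbtg, hNAt, hNAg]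
        with ω e1 e2 e3 et eg ett etg nat nag
      rw [← e1, e2, Pi.sub_apply, et, eg, nat, nag, ← ett, ← etg, ← Pi.sub_apply, ← e3]

  -- parallel trends, pointwise over the relevant periods
  have hPT' : ∀ᵐ ω ∂E.μ, ∀ s ∈ Finset.Icc g t,
      (((E.μ)[|E.cell (g : ℕ∞) 1])[fun ω' => E.Ypo ⊤ s ω' - E.Ypo ⊤ (s - 1) ω'|E.mX]) ω
        - (((E.μ)[|E.cell (g : ℕ∞) 0])[fun ω' => E.Ypo ⊤ s ω' - E.Ypo ⊤ (s - 1) ω'|E.mX]) ω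
      = (((E.μ)[|E.cell gc 1])[fun ω' => E.Ypo ⊤ s ω' - E.Ypo ⊤ (s - 1) ω'|E.mX]) ω
        - (((E.μ)[|E.cell gc 0])[fun ω' => E.Ypo ⊤ s ω' - E.Ypo ⊤ (s - 1) ω'|E.mX]) ω := by
    refine (ae_ball_iff (Finset.Icc g t).countable_toSet).mpr fun s hs => ?_
    have hs' : g ≤ s ∧ s ≤ t := by simpa using hs
    have hmax : max (g : ℕ∞) (s : ℕ∞) < gc := by
      refine max_lt (lt_of_le_of_lt (le_max_left _ (t : ℕ∞)) hgcmax) ?_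
      exact lt_of_le_of_lt
        (le_trans (by exact_mod_cast hs'.2) (le_max_right (g : ℕ∞) _)) hgcmax
    have hs1 : g ≤ s := hs'.1
    have hs2 : s ≤ E.T := by omega
    exact hPT g hg gc hgcS s hs1 hs2 hmax
  -- the key a.e. identity
  have hbig : (fun ω => E.pX (g : ℕ∞) 1 ω *
        (E.mReg g t (g : ℕ∞) 0 ω + E.mReg g t gc 1 ω - E.mReg g t gc 0 ω)) =ᵐ[E.μ]
      (E.μ)[(E.cell (g : ℕ∞) 1).indicator
        (fun ω' => E.Ypo ⊤ t ω' - E.Ypo ⊤ (g - 1) ω')|E.mX] := by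
    filter_upwards [hmD10, hmDc1, hmDc0, hsum (g : ℕ∞) hg 1 le_rfl,
      hsum (g : ℕ∞) hg 0 (by omega), hsum gc hgcS 1 le_rfl, hsum gc hgcS 0 (by omega),
      hPT', hpX_pos (g : ℕ∞) hg 0 (by omega), hpX_pos gc hgcS 1 le_rfl,
      hpX_pos gc hgcS 0 (by omega)]
      with ω e10 ec1 ec0 s11 s10 sc1 sc0 ept p10 pc1 pc0
    have h10 := mul_left_cancel₀ (ne_of_gt (lt_trans hε p10))
      (e10.trans (s10.trans (Finset.mul_sum _ _ _).symm))
    have hc1 := mul_left_cancel₀ (ne_of_gt (lt_trans hε pc1))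
      (ec1.trans (sc1.trans (Finset.mul_sum _ _ _).symm))
    have hc0 := mul_left_cancel₀ (ne_of_gt (lt_trans hε pc0))
      (ec0.trans (sc0.trans (Finset.mul_sum _ _ _).symm))
    rw [h10, hc1, hc0, s11, ← Finset.mul_sum]
    congr 1
    rw [← Finset.sum_add_distrib, ← Finset.sum_sub_distrib]
    refine Finset.sum_congr rfl fun s hs => ?_
    have := ept s hs
    linarith
  -- integrability of the weighted regressions
  have hpm_int : ∀ g' ∈ E.𝒮, ∀ q' ≤ 1,
      Integrable (fun ω => E.pX (g : ℕ∞) 1 ω * E.mReg g t g' q' ω) E.μ := by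
    intro g' h q' hq
    refine Integrable.mono' (hBint g' h q' hq).norm
      ((((hpX_sm (g : ℕ∞) 1).mono hm).aestronglyMeasurable).mul
        ((stronglyMeasurable_condExp.mono hm).aestronglyMeasurable)) ?_
    filter_upwards [hpX_nonneg (g : ℕ∞) 1, hpX_le1 (g : ℕ∞) 1] with ω h0 h1
    rw [norm_mul]
    calc ‖E.pX (g : ℕ∞) 1 ω‖ * ‖E.mReg g t g' q' ω‖
        ≤ 1 * ‖E.mReg g t g' q' ω‖ := by
          refine mul_le_mul_of_nonneg_right ?_ (norm_nonneg _)
          rw [Real.norm_eq_abs, abs_of_nonneg h0]; exact h1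
      _ = ‖E.mReg g t g' q' ω‖ := one_mul _
  -- expectation of regressions over the treated cell
  have hD' : ∀ g' ∈ E.𝒮, ∀ q' ≤ 1,
      ∫ ω, E.mReg g t g' q' ω ∂((E.μ)[|E.cell (g : ℕ∞) 1])
        = (E.μ (E.cell (g : ℕ∞) 1)).toReal⁻¹ *
            ∫ ω, E.pX (g : ℕ∞) 1 ω * E.mReg g t g' q' ω ∂E.μ := by
    intro g' h q' hq
    rw [TripleDiffAux.integral_cond E.μ (hmeas (g : ℕ∞) 1) (E.mReg g t g' q')]
    congr 1
    have hind : Integrable ((E.cell (g : ℕ∞) 1).indicator (E.mReg g t g' q')) E.μ :=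
      (hBint g' h q' hq).indicator (hmeas _ _)
    have h2 := hpull (g : ℕ∞) 1 (E.mReg g t g' q') stronglyMeasurable_condExp hind
    calc ∫ ω, (E.cell (g : ℕ∞) 1).indicator (E.mReg g t g' q') ω ∂E.μ
        = ∫ ω, ((E.μ)[(E.cell (g : ℕ∞) 1).indicator (E.mReg g t g' q')|E.mX]) ω ∂E.μ :=
          (integral_condExp hm).symm
      _ = ∫ ω, E.mReg g t g' q' ω * E.pX (g : ℕ∞) 1 ω ∂E.μ := integral_congr_ae h2
      _ = ∫ ω, E.pX (g : ℕ∞) 1 ω * E.mReg g t g' q' ω ∂E.μ := by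
          congr 1; funext ω; ring
  -- integrability under the treated conditional measure
  have hint_cond : ∀ (f : Ω → ℝ), Integrable f E.μ →
      Integrable f ((E.μ)[|E.cell (g : ℕ∞) 1]) :=
    fun f hf => TripleDiffAux.integrable_cond hne0' hf
  have hYg_t : Integrable (E.Ypo (g : ℕ∞) t) E.μ := E.hYpo _ hg t (by omega) htT
  have hYg_g : Integrable (E.Ypo (g : ℕ∞) (g - 1)) E.μ :=
    E.hYpo _ hg (g - 1) (by omega) (by omega)
  -- no anticipation for the treated group at period g-1
  have hNAg' : ∫ ω, E.Ypo (g : ℕ∞) (g - 1) ω ∂((E.μ)[|E.cell (g : ℕ∞) 1])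
      = ∫ ω, E.Ypo ⊤ (g - 1) ω ∂((E.μ)[|E.cell (g : ℕ∞) 1]) := by
    haveI : IsProbabilityMeasure ((E.μ)[|E.cell (g : ℕ∞) 1]) :=
      cond_isProbabilityMeasure hne0'
    have h1 : ∫ ω, E.Ypo (g : ℕ∞) (g - 1) ω ∂((E.μ)[|E.cell (g : ℕ∞) 1])
        = ∫ ω, (((E.μ)[|E.cell (g : ℕ∞) 1])[E.Ypo (g : ℕ∞) (g - 1)|E.mX]) ω
            ∂((E.μ)[|E.cell (g : ℕ∞) 1]) := (integral_condExp hm).symm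
    have h2 : ∫ ω, E.Ypo ⊤ (g - 1) ω ∂((E.μ)[|E.cell (g : ℕ∞) 1])
        = ∫ ω, (((E.μ)[|E.cell (g : ℕ∞) 1])[E.Ypo ⊤ (g - 1)|E.mX]) ω
            ∂((E.μ)[|E.cell (g : ℕ∞) 1]) := (integral_condExp hm).symm
    rw [h1, h2]
    exact integral_congr_ae (TripleDiffAux.ae_cond (hNA g hg (g - 1) (by omega) (by omega)))
  -- decomposition of the treated-cell expectation of the observed long difference
  have hATT : ∫ ω, (E.Yobs t ω - E.Yobs (g - 1) ω) ∂((E.μ)[|E.cell (g : ℕ∞) 1])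
      = E.ATT g t + ∫ ω, (E.Ypo ⊤ t ω - E.Ypo ⊤ (g - 1) ω)
          ∂((E.μ)[|E.cell (g : ℕ∞) 1]) := by
    have hobs1 : (fun ω => E.Yobs t ω - E.Yobs (g - 1) ω)
        =ᵐ[(E.μ)[|E.cell (g : ℕ∞) 1]]
        fun ω => E.Ypo (g : ℕ∞) t ω - E.Ypo (g : ℕ∞) (g - 1) ω := by
      filter_upwards [TripleDiffAux.ae_cond_mem (μ := E.μ) (hmeas (g : ℕ∞) 1)] with ω hω
      obtain ⟨hs, hq⟩ := hω
      have hG : E.G ω = (g : ℕ∞) := by unfold Setup.G; rw [if_pos hq, hs]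
      show E.Ypo (E.G ω) t ω - E.Ypo (E.G ω) (g - 1) ω = _
      rw [hG]
    rw [integral_congr_ae hobs1]
    unfold Setup.ATT
    rw [integral_sub (hint_cond _ hYg_t) (hint_cond _ hYg_g),
      integral_sub (hint_cond _ hYg_t) (hint_cond _ (hYtop t (by omega) htT)),
      integral_sub (hint_cond _ (hYtop t (by omega) htT))
        (hint_cond _ (hYtop (g - 1) (by omega) (by omega))),
      hNAg']
    ring
  -- sum of the three regression expectations
  have hIsum : ∫ ω, E.mReg g t (g : ℕ∞) 0 ω ∂((E.μ)[|E.cell (g : ℕ∞) 1])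
      + ∫ ω, E.mReg g t gc 1 ω ∂((E.μ)[|E.cell (g : ℕ∞) 1])
      - ∫ ω, E.mReg g t gc 0 ω ∂((E.μ)[|E.cell (g : ℕ∞) 1])
      = ∫ ω, (E.Ypo ⊤ t ω - E.Ypo ⊤ (g - 1) ω) ∂((E.μ)[|E.cell (g : ℕ∞) 1]) := by
    have h1 : ∫ ω, E.pX (g : ℕ∞) 1 ω *
        (E.mReg g t (g : ℕ∞) 0 ω + E.mReg g t gc 1 ω - E.mReg g t gc 0 ω) ∂E.μ
        = (E.μ (E.cell (g : ℕ∞) 1)).toReal *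
            ∫ ω, (E.Ypo ⊤ t ω - E.Ypo ⊤ (g - 1) ω) ∂((E.μ)[|E.cell (g : ℕ∞) 1]) := by
      rw [integral_congr_ae hbig, integral_condExp hm,
        TripleDiffAux.integral_indicator_cond E.μ (hmeas _ _) hne0' (hneT _ _)]
    have h2 : ∫ ω, E.pX (g : ℕ∞) 1 ω *
        (E.mReg g t (g : ℕ∞) 0 ω + E.mReg g t gc 1 ω - E.mReg g t gc 0 ω) ∂E.μ
        = ∫ ω, E.pX (g : ℕ∞) 1 ω * E.mReg g t (g : ℕ∞) 0 ω ∂E.μ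
          + ∫ ω, E.pX (g : ℕ∞) 1 ω * E.mReg g t gc 1 ω ∂E.μ
          - ∫ ω, E.pX (g : ℕ∞) 1 ω * E.mReg g t gc 0 ω ∂E.μ := by
      have e : ∀ ω, E.pX (g : ℕ∞) 1 ω *
          (E.mReg g t (g : ℕ∞) 0 ω + E.mReg g t gc 1 ω - E.mReg g t gc 0 ω)
          = (E.pX (g : ℕ∞) 1 ω * E.mReg g t (g : ℕ∞) 0 ω
              + E.pX (g : ℕ∞) 1 ω * E.mReg g t gc 1 ω)
            - E.pX (g : ℕ∞) 1 ω * E.mReg g t gc 0 ω := fun ω => by ring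
      simp only [e]
      have i1 := hpm_int (g : ℕ∞) hg 0 (Nat.zero_le 1)
      have i2 := hpm_int gc hgcS 1 le_rfl
      have i3 := hpm_int gc hgcS 0 (Nat.zero_le 1)
      have iadd : Integrable (fun ω => E.pX (g : ℕ∞) 1 ω * E.mReg g t (g : ℕ∞) 0 ω
          + E.pX (g : ℕ∞) 1 ω * E.mReg g t gc 1 ω) E.μ := i1.add i2
      rw [integral_sub iadd i3, integral_add i1 i2]
    rw [hD' (g : ℕ∞) hg 0 (Nat.zero_le 1), hD' gc hgcS 1 le_rfl, hD' gc hgcS 0 (Nat.zero_le 1),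
      ← mul_add, ← mul_sub, ← h2, h1, ← mul_assoc, inv_mul_cancel₀ hP, one_mul]
  -- final assembly
  unfold Setup.ATTdr
  rw [hC (g : ℕ∞) hg 0 (by omega), hC gc hgcS 1 le_rfl, hC gc hgcS 0 (by omega)]
  have hsplit3 : ∀ g' ∈ E.𝒮, ∀ q' ≤ 1,
      ∫ ω, (E.Yobs t ω - E.Yobs (g - 1) ω - E.mReg g t g' q' ω)
          ∂((E.μ)[|E.cell (g : ℕ∞) 1])
        = ∫ ω, (E.Yobs t ω - E.Yobs (g - 1) ω) ∂((E.μ)[|E.cell (g : ℕ∞) 1])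
          - ∫ ω, E.mReg g t g' q' ω ∂((E.μ)[|E.cell (g : ℕ∞) 1]) :=
    fun g' h q' hq => integral_sub (hint_cond _ hΔ) (hint_cond _ (hBint g' h q' hq))
  rw [hsplit3 (g : ℕ∞) hg 0 (Nat.zero_le 1), hsplit3 gc hgcS 1 le_rfl, hsplit3 gc hgcS 0 (Nat.zero_le 1), hATT]
  linarith [hIsum]

end Setup

end TripleDiff

open TripleDiff

/-- **Over-identification (Corollary 1).**
Under Assumptions SO, NA, and DDD-CPT, for every `g ∈ 𝒢_trt` and every `t` with
`g ≤ t ≤ T`, letting `𝒢_c^{g,t} = {g_c ∈ 𝒮 : g_c > max{g,t}}`, for any real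
weights `(w_{g_c})` summing to one over `𝒢_c^{g,t}` one has
`ATT(g,t) = Σ_{g_c ∈ 𝒢_c^{g,t}} w_{g_c} · ATT_dr,g_c(g,t)`. -/
theorem over_identification {Ω : Type*} [MeasurableSpace Ω] {d : ℕ} (E : Setup Ω d)
    (hSO : E.StrongOverlap) (hNA : E.NoAnticipation) (hPT : E.ParallelTrends)
    (g : ℕ) (hg : (g : ℕ∞) ∈ E.𝒮) (t : ℕ) (hgt : g ≤ t) (htT : t ≤ E.T)
    (Gc : Finset ℕ∞) (hGc : ∀ gc : ℕ∞, gc ∈ Gc ↔ gc ∈ E.𝒮 ∧ max (g : ℕ∞) (t : ℕ∞) < gc)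
    (w : ℕ∞ → ℝ) (hw : ∑ gc ∈ Gc, w gc = 1) :
    E.ATT g t = ∑ gc ∈ Gc, w gc * E.ATTdr g t gc := by
  have key : ∀ gc ∈ Gc, E.ATTdr g t gc = E.ATT g t := fun gc hgc =>
    E.ATTdr_eq_ATT hSO hNA hPT g hg t hgt htT gc ((hGc gc).1 hgc).1 ((hGc gc).1 hgc).2
  calc E.ATT g t = ∑ gc ∈ Gc, w gc * E.ATT g t := by
        rw [← Finset.sum_mul, hw, one_mul]
    _ = ∑ gc ∈ Gc, w gc * E.ATTdr g t gc :=
        Finset.sum_congr rfl fun gc h => by rw [key gc h]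
end

section
/- Failure of the pooled not-yet-treated comparison in staggered DDD (the claim illustrated in Section 3.2 and Figure 2(a)): there exist a finite probability space and random variables (Y_1, Y_2, Y_3, S, Q) with S ∈ {2, 3, ∞}, Q ∈ {0,1}, all six cells having positive probability, generated from potential outcomes satisfying no anticipation and the unconditional DDD parallel trends assumption (DDD-CPT with X constant), such that the pooled not-yet-treated estimand θ_pool = (E[Y_2 − Y_1 | S=2, Q=1] − E[Y_2 − Y_1 | S=2, Q=0]) − (E[Y_2 − Y_1 | S>2, Q=1] − E[Y_2 − Y_1 | S>2, Q=0]) differs from ATT(2,2), where {S>2} = {S=3} ∪ {S=∞}. -/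
open MeasureTheory ProbabilityTheory

/-- A finite staggered DDD data-generating process with three periods,
`S ∈ {2, 3, ∞}` (with `∞` coded as `⊤ : ℕ∞`) and `Q ∈ {0,1}`, all six cells
having positive probability, generated from potential outcomes satisfying
no anticipation and the unconditional DDD parallel trends assumption, on which
the pooled not-yet-treated estimand differs from `ATT(2,2)`. -/
structure PooledNYTCounterexample (Ω : Type) [MeasurableSpace Ω] [Fintype Ω] where
  /-- the probability measure -/
  μ : Measure Ω
  isProb : IsProbabilityMeasure μ
  /-- the enabling-group variable, `S ∈ {2, 3, ∞}` -/
  S : Ω → ℕ∞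
  hS : Measurable S
  hSval : ∀ ω, S ω = 2 ∨ S ω = 3 ∨ S ω = ⊤
  /-- the eligibility indicator, `Q ∈ {0,1}` -/
  Q : Ω → ℕ
  hQ : Measurable Q
  hQval : ∀ ω, Q ω ≤ 1
  /-- potential outcomes `Y_t(g)` -/
  Ypo : ℕ∞ → ℕ → Ω → ℝ
  hYpo : ∀ g t, Integrable (Ypo g t) μ
  /-- observed outcomes `Y_t = Σ_g 1{G = g}·Y_t(g)` with `G = S` if `Q = 1`,
  `G = ∞` if `Q = 0` -/
  Y : ℕ → Ω → ℝ
  hY : ∀ t ω, Y t ω = Ypo (if Q ω = 1 then S ω else ⊤) t ω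
  /-- all six cells have positive probability -/
  hcells : ∀ g ∈ ({2, 3, ⊤} : Finset ℕ∞), ∀ q ≤ 1, 0 < μ {ω | S ω = g ∧ Q ω = q}
  /-- no anticipation: for every treated `g` and every `t < g`,
  `E[Y_t(g) | S=g, Q=1] = E[Y_t(∞) | S=g, Q=1]` -/
  hNA : ∀ g : ℕ, ((g : ℕ∞) = 2 ∨ (g : ℕ∞) = 3) → ∀ t : ℕ, 1 ≤ t → t < g →
    ∫ ω, Ypo (g : ℕ∞) t ω ∂(μ[|{ω | S ω = (g : ℕ∞) ∧ Q ω = 1}])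
      = ∫ ω, Ypo ⊤ t ω ∂(μ[|{ω | S ω = (g : ℕ∞) ∧ Q ω = 1}])
  /-- unconditional DDD parallel trends (DDD-CPT with `X` constant) -/
  hPT : ∀ g : ℕ, ((g : ℕ∞) = 2 ∨ (g : ℕ∞) = 3) →
    ∀ g' ∈ ({2, 3, ⊤} : Finset ℕ∞), ∀ t : ℕ, g ≤ t → t ≤ 3 →
      max (g : ℕ∞) (t : ℕ∞) < g' →
      (∫ ω, (Ypo ⊤ t ω - Ypo ⊤ (t - 1) ω) ∂(μ[|{ω | S ω = (g : ℕ∞) ∧ Q ω = 1}]))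
          - (∫ ω, (Ypo ⊤ t ω - Ypo ⊤ (t - 1) ω) ∂(μ[|{ω | S ω = (g : ℕ∞) ∧ Q ω = 0}]))
        = (∫ ω, (Ypo ⊤ t ω - Ypo ⊤ (t - 1) ω) ∂(μ[|{ω | S ω = g' ∧ Q ω = 1}]))
          - (∫ ω, (Ypo ⊤ t ω - Ypo ⊤ (t - 1) ω) ∂(μ[|{ω | S ω = g' ∧ Q ω = 0}]))
  /-- the pooled not-yet-treated estimand
  `θ_pool = (E[Y_2 − Y_1 | S=2, Q=1] − E[Y_2 − Y_1 | S=2, Q=0])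
    − (E[Y_2 − Y_1 | S>2, Q=1] − E[Y_2 − Y_1 | S>2, Q=0])`
  differs from `ATT(2,2) = E[Y_2(2) − Y_2(∞) | S=2, Q=1]` -/
  hfail :
    ((∫ ω, (Y 2 ω - Y 1 ω) ∂(μ[|{ω | S ω = 2 ∧ Q ω = 1}]))
        - (∫ ω, (Y 2 ω - Y 1 ω) ∂(μ[|{ω | S ω = 2 ∧ Q ω = 0}])))
      - ((∫ ω, (Y 2 ω - Y 1 ω) ∂(μ[|{ω | 2 < S ω ∧ Q ω = 1}]))
        - (∫ ω, (Y 2 ω - Y 1 ω) ∂(μ[|{ω | 2 < S ω ∧ Q ω = 0}])))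
    ≠ ∫ ω, (Ypo 2 2 ω - Ypo ⊤ 2 ω) ∂(μ[|{ω | S ω = 2 ∧ Q ω = 1}])

open scoped ENNReal

namespace PNYT

noncomputable section

def w : Fin 6 → ℝ≥0∞ := fun i => if i = 2 ∨ i = 5 then 2/8 else 1/8

lemma w_sum : ∑ i, w i = 1 := by
  rw [Fin.sum_univ_six]
  simp (config := { decide := true }) only [w, if_true, if_false]
  rw [ENNReal.div_add_div_same, ENNReal.div_add_div_same, ENNReal.div_add_div_same,
    ENNReal.div_add_div_same, ENNReal.div_add_div_same]
  norm_num
  exact ENNReal.div_self (by norm_num) (by norm_num)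

def μ : Measure (Fin 6) := (PMF.ofFintype w w_sum).toMeasure

instance : IsProbabilityMeasure μ :=
  show IsProbabilityMeasure (PMF.ofFintype w w_sum).toMeasure from inferInstance

lemma μ_apply (s : Set (Fin 6)) : μ s = ∑ x, s.indicator w x := by
  rw [μ, PMF.toMeasure_apply_fintype]; rfl

def Sf : Fin 6 → ℕ∞ := ![2, 2, 3, 3, ⊤, ⊤]
def Qf : Fin 6 → ℕ := ![1, 0, 1, 0, 1, 0]

def Ypo : ℕ∞ → ℕ → Fin 6 → ℝ := fun g t ω =>
  if t = 2 then (if g = 2 then 1 else if Sf ω = 3 then 1 else 0) else 0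

def Yobs : ℕ → Fin 6 → ℝ := fun t ω => Ypo (if Qf ω = 1 then Sf ω else ⊤) t ω

lemma sum1 : (2/8 + 8⁻¹ : ℝ≥0∞) = 3/8 := by
  rw [show (8:ℝ≥0∞)⁻¹ = 1/8 from (one_div (8:ℝ≥0∞)).symm, ENNReal.div_add_div_same]
  norm_num

lemma sum2 : (8⁻¹ + 2/8 : ℝ≥0∞) = 3/8 := by
  rw [show (8:ℝ≥0∞)⁻¹ = 1/8 from (one_div (8:ℝ≥0∞)).symm, ENNReal.div_add_div_same]
  norm_num

lemma integral_cond (s : Set (Fin 6)) (f : Fin 6 → ℝ) :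
    ∫ ω, f ω ∂(μ[|s]) = (μ s)⁻¹.toReal * ∑ ω, (μ ({ω} ∩ s)).toReal * f ω := by
  rw [ProbabilityTheory.cond, integral_smul_measure,
    integral_fintype _]
  simp [Measure.real_def, Measure.restrict_apply (measurableSet_singleton _)]
  exact Integrable.of_finite

def ce : PooledNYTCounterexample (Fin 6) where
  μ := μ
  isProb := inferInstance
  S := Sf
  hS := measurable_of_countable _
  hSval := by decide
  Q := Qf
  hQ := measurable_of_countable _
  hQval := by decide
  Ypo := Ypo
  hYpo := fun g t => .of_finite
  Y := Yobs
  hY := fun t ω => rfl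
  hcells := by
    intro g hg q hq
    interval_cases q <;> fin_cases hg <;>
      simp (config := { decide := true }) [μ_apply, Fin.sum_univ_six, Set.indicator_apply,
        Sf, Qf, w, sum1, sum2]
  hNA := by
    intro g hg t ht1 ht2
    have hg2 : g = 2 ∨ g = 3 := by
      rcases hg with h | h
      · exact Or.inl (by exact_mod_cast h)
      · exact Or.inr (by exact_mod_cast h)
    rcases hg2 with rfl | rfl <;> interval_cases t <;>
    · simp only [integral_cond]
      simp (config := { decide := true }) [μ_apply, Fin.sum_univ_six, Set.indicator_apply,
        Sf, Qf, Ypo, w, sum1, sum2, Nat.cast_ofNat]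
  hPT := by
    intro g hg g' hg' t ht1 ht2 hmax
    have hg2 : g = 2 ∨ g = 3 := by
      rcases hg with h | h
      · exact Or.inl (by exact_mod_cast h)
      · exact Or.inr (by exact_mod_cast h)
    rcases hg2 with rfl | rfl <;> fin_cases hg' <;> interval_cases t <;>
      first
      | exact absurd hmax (by decide)
      | (simp only [integral_cond]
         simp (config := { decide := true }) [μ_apply, Fin.sum_univ_six, Set.indicator_apply,
           Sf, Qf, Ypo, w, sum1, sum2, Nat.cast_ofNat]
         try norm_num)
  hfail := by
    simp only [integral_cond]
    simp (config := { decide := true }) [μ_apply, Fin.sum_univ_six, Set.indicator_apply,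
      Sf, Qf, Ypo, Yobs, w, sum1, sum2]
    norm_num

end
end PNYT

/-- **Failure of the pooled not-yet-treated comparison in staggered DDD
(Section 3.2, Figure 2(a)).**  There exist a finite probability space and
random variables `(Y_1, Y_2, Y_3, S, Q)` generated from potential outcomes
satisfying no anticipation and unconditional DDD parallel trends, such that
the pooled not-yet-treated estimand `θ_pool` differs from `ATT(2,2)`. -/
theorem pooled_not_yet_treated_can_fail :
    ∃ (Ω : Type) (m : MeasurableSpace Ω) (f : Fintype Ω),
      Nonempty (@PooledNYTCounterexample Ω m f) :=
  ⟨Fin 6, inferInstance, inferInstance, ⟨PNYT.ce⟩⟩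
end

section
/- Failure of the difference-of-two-DiDs characterization of DDD under covariate-conditional parallel trends (the claim of Section 3.1 and Remark 1): there exist a probability space and random variables (Y_1, Y_2, S, Q, X) with S ∈ {2, ∞}, Q ∈ {0,1}, X real-valued with finite support, satisfying strong overlap, no anticipation, and the conditional DDD parallel trends assumption, such that the difference of the two covariate-adjusted DiD estimands θ_{S=2} − θ_{S=∞} differs from ATT(2,2), where θ_{S=2} = E[Y_2 − Y_1 − E[Y_2 − Y_1 | X, S=2, Q=0] | S=2, Q=1] and θ_{S=∞} = E[Y_2 − Y_1 − E[Y_2 − Y_1 | X, S=∞, Q=0] | S=∞, Q=1]. -/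
open MeasureTheory ProbabilityTheory
open scoped ENNReal

section Helper

lemma condexp_two_atoms {α : Type*} {𝒢 : MeasurableSpace α} {m0 : MeasurableSpace α}
    (hm : 𝒢 ≤ m0) (ν : Measure α) [IsFiniteMeasure ν]
    {A : Set α} (hA : MeasurableSet[𝒢] A)
    (hatoms : ∀ s : Set α, MeasurableSet[𝒢] s → s = ∅ ∨ s = A ∨ s = Aᶜ ∨ s = Set.univ)
    (hApos : ν A ≠ 0) (hAcpos : ν Aᶜ ≠ 0)
    {f : α → ℝ} (hf : Integrable f ν)
    {cA cB : ℝ}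
    (hcA : cA * (ν A).toReal = ∫ x in A, f x ∂ν)
    (hcB : cB * (ν Aᶜ).toReal = ∫ x in Aᶜ, f x ∂ν) :
    (∀ ω ∈ A, (ν[f | 𝒢]) ω = cA) ∧ (∀ ω ∈ Aᶜ, (ν[f | 𝒢]) ω = cB) := by
  haveI : SigmaFinite (ν.trim hm) := inferInstance
  set g : α → ℝ := A.indicator (fun _ => cA) + Aᶜ.indicator (fun _ => cB) with hgdef
  have hgA : ∀ ω ∈ A, g ω = cA := by
    intro ω hω
    simp [hgdef, Set.indicator_of_mem hω, Set.indicator_of_notMem (by simpa using hω : ω ∉ Aᶜ)]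
  have hgB : ∀ ω ∈ Aᶜ, g ω = cB := by
    intro ω hω
    simp [hgdef, Set.indicator_of_mem hω, Set.indicator_of_notMem (by simpa using hω : ω ∉ A)]
  have hgsm : StronglyMeasurable[𝒢] g :=
    (stronglyMeasurable_const.indicator hA).add (stronglyMeasurable_const.indicator hA.compl)
  have hgint : Integrable g ν :=
    ((integrable_const cA).indicator (hm _ hA)).add ((integrable_const cB).indicator (hm _ hA.compl))
  have hintA : ∫ x in A, g x ∂ν = ∫ x in A, f x ∂ν := by
    rw [setIntegral_congr_fun (hm _ hA) (fun x hx => hgA x hx), setIntegral_const, smul_eq_mul,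
      mul_comm, measureReal_def, hcA]
  have hintB : ∫ x in Aᶜ, g x ∂ν = ∫ x in Aᶜ, f x ∂ν := by
    rw [setIntegral_congr_fun (hm _ hA.compl) (fun x hx => hgB x hx), setIntegral_const,
      smul_eq_mul, mul_comm, measureReal_def, hcB]
  have hae : g =ᵐ[ν] ν[f | 𝒢] := by
    refine ae_eq_condExp_of_forall_setIntegral_eq hm hf
      (fun s _ _ => hgint.integrableOn) (fun s hs _ => ?_)
      (hgsm.aestronglyMeasurable)
    rcases hatoms s hs with rfl | rfl | rfl | rfl
    · simp
    · exact hintA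
    · exact hintB
    · rw [Measure.restrict_univ, ← integral_add_compl (hm _ hA) hgint,
        ← integral_add_compl (hm _ hA) hf, hintA, hintB]
  have hcsm : StronglyMeasurable[𝒢] (ν[f | 𝒢]) := stronglyMeasurable_condExp
  set h := ν[f | 𝒢] with hh
  have hconstA : ∀ a ∈ A, ∀ b ∈ A, h a = h b := by
    intro a ha b hb
    have hs : MeasurableSet[𝒢] (h ⁻¹' {h a}) := hcsm.measurable (measurableSet_singleton _)
    rcases hatoms _ hs with he | he | he | he
    · exact absurd (he ▸ (show a ∈ h ⁻¹' {h a} from rfl)) (Set.notMem_empty a)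
    · have : b ∈ h ⁻¹' {h a} := he ▸ hb
      exact (this : h b = h a).symm
    · exact absurd (he ▸ (show a ∈ h ⁻¹' {h a} from rfl)) (fun hc => hc ha)
    · have : b ∈ h ⁻¹' {h a} := he ▸ Set.mem_univ b
      exact (this : h b = h a).symm
  have hconstB : ∀ a ∈ Aᶜ, ∀ b ∈ Aᶜ, h a = h b := by
    intro a ha b hb
    have hs : MeasurableSet[𝒢] (h ⁻¹' {h a}) := hcsm.measurable (measurableSet_singleton _)
    rcases hatoms _ hs with he | he | he | he
    · exact absurd (he ▸ (show a ∈ h ⁻¹' {h a} from rfl)) (Set.notMem_empty a)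
    · exact absurd (he ▸ (show a ∈ h ⁻¹' {h a} from rfl)) ha
    · have : b ∈ h ⁻¹' {h a} := he ▸ hb
      exact (this : h b = h a).symm
    · have : b ∈ h ⁻¹' {h a} := he ▸ Set.mem_univ b
      exact (this : h b = h a).symm
  have hbad : ν {x | g x ≠ h x} = 0 := by
    simpa [Filter.EventuallyEq, ae_iff] using hae
  constructor
  · intro ω hω
    have hex : ∃ a ∈ A, g a = h a := by
      by_contra hc
      push_neg at hc
      exact hApos (measure_mono_null (fun x hx => hc x hx) hbad)
    obtain ⟨a, ha, hga⟩ := hex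
    calc h ω = h a := hconstA ω hω a ha
    _ = g a := hga.symm
    _ = cA := hgA a ha
  · intro ω hω
    have hex : ∃ a ∈ Aᶜ, g a = h a := by
      by_contra hc
      push_neg at hc
      exact hAcpos (measure_mono_null (fun x hx => hc x hx) hbad)
    obtain ⟨a, ha, hga⟩ := hex
    calc h ω = h a := hconstB ω hω a ha
    _ = g a := hga.symm
    _ = cB := hgB a ha

end Helper

namespace DDDcex

abbrev Om : Type := Bool × Bool × Bool

lemma msOm (s : Set Om) : MeasurableSet s := s.toFinite.measurableSet

noncomputable def w : Om → ℝ≥0∞ := fun ω =>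
  if ω = (false, true, false) then 3/16 else if ω = (false, true, true) then 1/16 else 2/16

noncomputable def μm : Measure Om := ∑ ω : Om, w ω • Measure.dirac ω

lemma μm_apply (s : Set Om) [DecidablePred (· ∈ s)] :
    μm s = ∑ ω : Om, if ω ∈ s then w ω else 0 := by
  simp only [μm, Measure.coe_finset_sum, Finset.sum_apply, Measure.smul_apply,
    Measure.dirac_apply' _ (msOm s), Set.indicator_apply, smul_eq_mul, mul_ite, mul_one, mul_zero,
    Pi.one_apply]

instance : IsProbabilityMeasure μm := by
  constructor
  rw [μm_apply]
  simp only [Set.mem_univ, if_true, Fintype.sum_prod_type, Fintype.sum_bool, w,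
    Prod.mk.injEq, if_true, if_false, and_true, and_false, false_and, true_and,
    Bool.true_eq_false, Bool.false_eq_true, ite_false, ite_true]
  simp only [ENNReal.div_add_div_same]
  norm_num
  exact ENNReal.div_self (by norm_num) (by norm_num)

lemma w_ne_top (ω : Om) : w ω ≠ ⊤ := by
  unfold w; split_ifs <;> exact (ENNReal.div_lt_top (by norm_num) (by norm_num)).ne

lemma w_toReal (ω : Om) : (w ω).toReal =
    if ω = (false, true, false) then 3/16 else if ω = (false, true, true) then 1/16 else 2/16 := by
  unfold w; split_ifs <;> simp

lemma ne_zero_of_toReal {x : ℝ≥0∞} (h : x.toReal ≠ 0) : x ≠ 0 := fun h0 => h (by simp [h0])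

lemma μm_toReal (s : Set Om) [DecidablePred (· ∈ s)] :
    (μm s).toReal = ∑ ω : Om, if ω ∈ s then (w ω).toReal else 0 := by
  rw [μm_apply, ENNReal.toReal_sum (fun a _ => by split_ifs; exacts [w_ne_top a, by simp])]
  congr 1; ext ω; split_ifs <;> simp

lemma μm_singleton (x : Om) : μm {x} = w x := by
  classical
  rw [μm_apply]
  rw [Finset.sum_eq_single x (fun b _ hb => by simp [Set.mem_singleton_iff, hb]) (by simp)]
  simp

lemma setIntegral_μm (s : Set Om) [DecidablePred (· ∈ s)] (f : Om → ℝ) :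
    ∫ ω in s, f ω ∂μm = ∑ ω : Om, if ω ∈ s then (w ω).toReal * f ω else 0 := by
  rw [← integral_indicator (msOm s), integral_fintype (Integrable.of_finite)]
  simp only [measureReal_def, μm_singleton, Set.indicator_apply, smul_eq_mul, mul_ite, mul_zero]

lemma cond_val (C s : Set Om) : (μm[|C]) s = (μm C)⁻¹ * μm (C ∩ s) :=
  cond_apply (msOm C) μm s

lemma setIntegral_cond (C s : Set Om) (f : Om → ℝ) :
    ∫ ω in s, f ω ∂(μm[|C]) = (μm C).toReal⁻¹ * ∫ ω in C ∩ s, f ω ∂μm := by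
  rw [ProbabilityTheory.cond, Measure.restrict_smul, integral_smul_measure,
    Measure.restrict_restrict (msOm s), Set.inter_comm s C, ENNReal.toReal_inv, smul_eq_mul]

lemma integral_cond (C : Set Om) (f : Om → ℝ) :
    ∫ ω, f ω ∂(μm[|C]) = (μm C).toReal⁻¹ * ∫ ω in C, f ω ∂μm := by
  rw [← setIntegral_univ (μ := μm[|C]) (f := f), setIntegral_cond, Set.inter_univ]

def Sf : Om → ℕ∞ := fun ω => if ω.1 then 2 else ⊤
def Qf : Om → ℕ := fun ω => if ω.2.1 then 1 else 0
noncomputable def Xf : Om → ℝ := fun ω => if ω.2.2 then 1 else 0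
def A : Set Om := {ω | ω.2.2 = false}
noncomputable def Y2if : Om → ℝ := fun ω => if ω.2.1 = true ∧ ω.2.2 = true then 1 else 0
def zf : Om → ℝ := fun _ => 0

lemma hXm : Measurable Xf := measurable_of_countable _

lemma hGle : MeasurableSpace.comap Xf inferInstance ≤ (inferInstance : MeasurableSpace Om) :=
  hXm.comap_le

lemma hA𝒢 : MeasurableSet[MeasurableSpace.comap Xf inferInstance] A := by
  refine ⟨{0}, measurableSet_singleton 0, ?_⟩
  ext ⟨s, q, x⟩
  cases x <;> simp [Xf, A]

lemma hatoms : ∀ s : Set Om, MeasurableSet[MeasurableSpace.comap Xf inferInstance] s →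
    s = ∅ ∨ s = A ∨ s = Aᶜ ∨ s = Set.univ := by
  rintro s ⟨B, hB, rfl⟩
  by_cases h0 : (0 : ℝ) ∈ B <;> by_cases h1 : (1 : ℝ) ∈ B
  · right; right; right
    ext ⟨s, q, x⟩; cases x <;> simp [Xf, h0, h1]
  · right; left
    ext ⟨s, q, x⟩; cases x <;> simp [Xf, A, h0, h1]
  · right; right; left
    ext ⟨s, q, x⟩; cases x <;> simp [Xf, A, h0, h1]
  · left
    ext ⟨s, q, x⟩; cases x <;> simp [Xf, h0, h1]

lemma cell21 : {ω' : Om | Sf ω' = 2 ∧ Qf ω' = 1} = {ω' : Om | ω'.1 = true ∧ ω'.2.1 = true} := by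
  ext ⟨s, q, x⟩; cases s <;> cases q <;> simp [Sf, Qf]

lemma cell20 : {ω' : Om | Sf ω' = 2 ∧ Qf ω' = 0} = {ω' : Om | ω'.1 = true ∧ ω'.2.1 = false} := by
  ext ⟨s, q, x⟩; cases s <;> cases q <;> simp [Sf, Qf]

lemma cellT1 : {ω' : Om | Sf ω' = ⊤ ∧ Qf ω' = 1} = {ω' : Om | ω'.1 = false ∧ ω'.2.1 = true} := by
  ext ⟨s, q, x⟩; cases s <;> cases q <;> simp [Sf, Qf]

lemma cellT0 : {ω' : Om | Sf ω' = ⊤ ∧ Qf ω' = 0} = {ω' : Om | ω'.1 = false ∧ ω'.2.1 = false} := by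
  ext ⟨s, q, x⟩; cases s <;> cases q <;> simp [Sf, Qf]


lemma ceo_tt :
    (∀ ω ∈ A, (μm[Set.indicator {ω' : Om | ω'.1 = true ∧ ω'.2.1 = true} (fun _ => (1:ℝ)) |
        MeasurableSpace.comap Xf inferInstance]) ω = 2/9) ∧
    (∀ ω ∈ Aᶜ, (μm[Set.indicator {ω' : Om | ω'.1 = true ∧ ω'.2.1 = true} (fun _ => (1:ℝ)) |
        MeasurableSpace.comap Xf inferInstance]) ω = 2/7) := by
  refine condexp_two_atoms hGle μm hA𝒢 hatoms ?_ ?_ Integrable.of_finite ?_ ?_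
  · refine ne_zero_of_toReal ?_
    classical
    rw [μm_toReal]
    simp only [A, Set.mem_setOf_eq, Fintype.sum_prod_type, Fintype.sum_bool, w_toReal]
    norm_num
  · refine ne_zero_of_toReal ?_
    classical
    rw [μm_toReal]
    simp only [A, Set.mem_compl_iff, Set.mem_setOf_eq, Fintype.sum_prod_type, Fintype.sum_bool,
      w_toReal]
    norm_num
  · classical
    rw [μm_toReal, setIntegral_μm]
    simp only [A, Set.mem_compl_iff, Set.mem_setOf_eq, Set.indicator_apply, Set.mem_inter_iff,
      Fintype.sum_prod_type, Fintype.sum_bool, w_toReal]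
    norm_num
  · classical
    rw [μm_toReal, setIntegral_μm]
    simp only [A, Set.mem_compl_iff, Set.mem_setOf_eq, Set.indicator_apply, Set.mem_inter_iff,
      Fintype.sum_prod_type, Fintype.sum_bool, w_toReal]
    norm_num

lemma ceo_tf :
    (∀ ω ∈ A, (μm[Set.indicator {ω' : Om | ω'.1 = true ∧ ω'.2.1 = false} (fun _ => (1:ℝ)) |
        MeasurableSpace.comap Xf inferInstance]) ω = 2/9) ∧
    (∀ ω ∈ Aᶜ, (μm[Set.indicator {ω' : Om | ω'.1 = true ∧ ω'.2.1 = false} (fun _ => (1:ℝ)) |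
        MeasurableSpace.comap Xf inferInstance]) ω = 2/7) := by
  refine condexp_two_atoms hGle μm hA𝒢 hatoms ?_ ?_ Integrable.of_finite ?_ ?_
  · refine ne_zero_of_toReal ?_
    classical
    rw [μm_toReal]
    simp only [A, Set.mem_setOf_eq, Fintype.sum_prod_type, Fintype.sum_bool, w_toReal]
    norm_num
  · refine ne_zero_of_toReal ?_
    classical
    rw [μm_toReal]
    simp only [A, Set.mem_compl_iff, Set.mem_setOf_eq, Fintype.sum_prod_type, Fintype.sum_bool,
      w_toReal]
    norm_num
  · classical
    rw [μm_toReal, setIntegral_μm]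
    simp only [A, Set.mem_compl_iff, Set.mem_setOf_eq, Set.indicator_apply, Set.mem_inter_iff,
      Fintype.sum_prod_type, Fintype.sum_bool, w_toReal]
    norm_num
  · classical
    rw [μm_toReal, setIntegral_μm]
    simp only [A, Set.mem_compl_iff, Set.mem_setOf_eq, Set.indicator_apply, Set.mem_inter_iff,
      Fintype.sum_prod_type, Fintype.sum_bool, w_toReal]
    norm_num

lemma ceo_ft :
    (∀ ω ∈ A, (μm[Set.indicator {ω' : Om | ω'.1 = false ∧ ω'.2.1 = true} (fun _ => (1:ℝ)) |
        MeasurableSpace.comap Xf inferInstance]) ω = 1/3) ∧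
    (∀ ω ∈ Aᶜ, (μm[Set.indicator {ω' : Om | ω'.1 = false ∧ ω'.2.1 = true} (fun _ => (1:ℝ)) |
        MeasurableSpace.comap Xf inferInstance]) ω = 1/7) := by
  refine condexp_two_atoms hGle μm hA𝒢 hatoms ?_ ?_ Integrable.of_finite ?_ ?_
  · refine ne_zero_of_toReal ?_
    classical
    rw [μm_toReal]
    simp only [A, Set.mem_setOf_eq, Fintype.sum_prod_type, Fintype.sum_bool, w_toReal]
    norm_num
  · refine ne_zero_of_toReal ?_
    classical
    rw [μm_toReal]
    simp only [A, Set.mem_compl_iff, Set.mem_setOf_eq, Fintype.sum_prod_type, Fintype.sum_bool,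
      w_toReal]
    norm_num
  · classical
    rw [μm_toReal, setIntegral_μm]
    simp only [A, Set.mem_compl_iff, Set.mem_setOf_eq, Set.indicator_apply, Set.mem_inter_iff,
      Fintype.sum_prod_type, Fintype.sum_bool, w_toReal]
    norm_num
  · classical
    rw [μm_toReal, setIntegral_μm]
    simp only [A, Set.mem_compl_iff, Set.mem_setOf_eq, Set.indicator_apply, Set.mem_inter_iff,
      Fintype.sum_prod_type, Fintype.sum_bool, w_toReal]
    norm_num

lemma ceo_ff :
    (∀ ω ∈ A, (μm[Set.indicator {ω' : Om | ω'.1 = false ∧ ω'.2.1 = false} (fun _ => (1:ℝ)) |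
        MeasurableSpace.comap Xf inferInstance]) ω = 2/9) ∧
    (∀ ω ∈ Aᶜ, (μm[Set.indicator {ω' : Om | ω'.1 = false ∧ ω'.2.1 = false} (fun _ => (1:ℝ)) |
        MeasurableSpace.comap Xf inferInstance]) ω = 2/7) := by
  refine condexp_two_atoms hGle μm hA𝒢 hatoms ?_ ?_ Integrable.of_finite ?_ ?_
  · refine ne_zero_of_toReal ?_
    classical
    rw [μm_toReal]
    simp only [A, Set.mem_setOf_eq, Fintype.sum_prod_type, Fintype.sum_bool, w_toReal]
    norm_num
  · refine ne_zero_of_toReal ?_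
    classical
    rw [μm_toReal]
    simp only [A, Set.mem_compl_iff, Set.mem_setOf_eq, Fintype.sum_prod_type, Fintype.sum_bool,
      w_toReal]
    norm_num
  · classical
    rw [μm_toReal, setIntegral_μm]
    simp only [A, Set.mem_compl_iff, Set.mem_setOf_eq, Set.indicator_apply, Set.mem_inter_iff,
      Fintype.sum_prod_type, Fintype.sum_bool, w_toReal]
    norm_num
  · classical
    rw [μm_toReal, setIntegral_μm]
    simp only [A, Set.mem_compl_iff, Set.mem_setOf_eq, Set.indicator_apply, Set.mem_inter_iff,
      Fintype.sum_prod_type, Fintype.sum_bool, w_toReal]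
    norm_num

lemma cec_tt :
    (∀ ω ∈ A, ((μm[|{ω' : Om | ω'.1 = true ∧ ω'.2.1 = true}])[(fun ω' => Y2if ω' - zf ω') |
        MeasurableSpace.comap Xf inferInstance]) ω = 0) ∧
    (∀ ω ∈ Aᶜ, ((μm[|{ω' : Om | ω'.1 = true ∧ ω'.2.1 = true}])[(fun ω' => Y2if ω' - zf ω') |
        MeasurableSpace.comap Xf inferInstance]) ω = 1) := by
  classical
  have hC : μm {ω' : Om | ω'.1 = true ∧ ω'.2.1 = true} ≠ 0 := by
    refine ne_zero_of_toReal ?_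
    rw [μm_toReal]
    simp only [Set.mem_setOf_eq, Fintype.sum_prod_type, Fintype.sum_bool, w_toReal]
    norm_num
  haveI := cond_isProbabilityMeasure (μ := μm) hC
  refine condexp_two_atoms hGle _ hA𝒢 hatoms ?_ ?_ Integrable.of_finite ?_ ?_
  · refine ne_zero_of_toReal ?_
    rw [cond_val, ENNReal.toReal_mul, ENNReal.toReal_inv, μm_toReal, μm_toReal]
    simp only [A, Set.mem_setOf_eq, Set.mem_inter_iff, Fintype.sum_prod_type, Fintype.sum_bool,
      w_toReal]
    norm_num
  · refine ne_zero_of_toReal ?_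
    rw [cond_val, ENNReal.toReal_mul, ENNReal.toReal_inv, μm_toReal, μm_toReal]
    simp only [A, Set.mem_compl_iff, Set.mem_setOf_eq, Set.mem_inter_iff, Fintype.sum_prod_type,
      Fintype.sum_bool, w_toReal]
    norm_num
  · rw [setIntegral_cond, setIntegral_μm, μm_toReal]
    simp only [A, Y2if, zf, Set.mem_setOf_eq, Set.mem_inter_iff, Fintype.sum_prod_type,
      Fintype.sum_bool, w_toReal]
    norm_num
  · rw [setIntegral_cond, setIntegral_μm, cond_val, ENNReal.toReal_mul, ENNReal.toReal_inv,
      μm_toReal, μm_toReal]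
    simp only [A, Y2if, zf, Set.mem_compl_iff, Set.mem_setOf_eq, Set.mem_inter_iff,
      Fintype.sum_prod_type, Fintype.sum_bool, w_toReal]
    norm_num
lemma cec_tf :
    (∀ ω ∈ A, ((μm[|{ω' : Om | ω'.1 = true ∧ ω'.2.1 = false}])[(fun ω' => Y2if ω' - zf ω') |
        MeasurableSpace.comap Xf inferInstance]) ω = 0) ∧
    (∀ ω ∈ Aᶜ, ((μm[|{ω' : Om | ω'.1 = true ∧ ω'.2.1 = false}])[(fun ω' => Y2if ω' - zf ω') |
        MeasurableSpace.comap Xf inferInstance]) ω = 0) := by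
  classical
  have hC : μm {ω' : Om | ω'.1 = true ∧ ω'.2.1 = false} ≠ 0 := by
    refine ne_zero_of_toReal ?_
    rw [μm_toReal]
    simp only [Set.mem_setOf_eq, Fintype.sum_prod_type, Fintype.sum_bool, w_toReal]
    norm_num
  haveI := cond_isProbabilityMeasure (μ := μm) hC
  refine condexp_two_atoms hGle _ hA𝒢 hatoms ?_ ?_ Integrable.of_finite ?_ ?_
  · refine ne_zero_of_toReal ?_
    rw [cond_val, ENNReal.toReal_mul, ENNReal.toReal_inv, μm_toReal, μm_toReal]
    simp only [A, Set.mem_setOf_eq, Set.mem_inter_iff, Fintype.sum_prod_type, Fintype.sum_bool,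
      w_toReal]
    norm_num
  · refine ne_zero_of_toReal ?_
    rw [cond_val, ENNReal.toReal_mul, ENNReal.toReal_inv, μm_toReal, μm_toReal]
    simp only [A, Set.mem_compl_iff, Set.mem_setOf_eq, Set.mem_inter_iff, Fintype.sum_prod_type,
      Fintype.sum_bool, w_toReal]
    norm_num
  · rw [setIntegral_cond, setIntegral_μm, μm_toReal]
    simp only [A, Y2if, zf, Set.mem_setOf_eq, Set.mem_inter_iff, Fintype.sum_prod_type,
      Fintype.sum_bool, w_toReal]
    norm_num
  · rw [setIntegral_cond, setIntegral_μm, cond_val, ENNReal.toReal_mul, ENNReal.toReal_inv,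
      μm_toReal, μm_toReal]
    simp only [A, Y2if, zf, Set.mem_compl_iff, Set.mem_setOf_eq, Set.mem_inter_iff,
      Fintype.sum_prod_type, Fintype.sum_bool, w_toReal]
    norm_num
lemma cec_ft :
    (∀ ω ∈ A, ((μm[|{ω' : Om | ω'.1 = false ∧ ω'.2.1 = true}])[(fun ω' => Y2if ω' - zf ω') |
        MeasurableSpace.comap Xf inferInstance]) ω = 0) ∧
    (∀ ω ∈ Aᶜ, ((μm[|{ω' : Om | ω'.1 = false ∧ ω'.2.1 = true}])[(fun ω' => Y2if ω' - zf ω') |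
        MeasurableSpace.comap Xf inferInstance]) ω = 1) := by
  classical
  have hC : μm {ω' : Om | ω'.1 = false ∧ ω'.2.1 = true} ≠ 0 := by
    refine ne_zero_of_toReal ?_
    rw [μm_toReal]
    simp only [Set.mem_setOf_eq, Fintype.sum_prod_type, Fintype.sum_bool, w_toReal]
    norm_num
  haveI := cond_isProbabilityMeasure (μ := μm) hC
  refine condexp_two_atoms hGle _ hA𝒢 hatoms ?_ ?_ Integrable.of_finite ?_ ?_
  · refine ne_zero_of_toReal ?_
    rw [cond_val, ENNReal.toReal_mul, ENNReal.toReal_inv, μm_toReal, μm_toReal]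
    simp only [A, Set.mem_setOf_eq, Set.mem_inter_iff, Fintype.sum_prod_type, Fintype.sum_bool,
      w_toReal]
    norm_num
  · refine ne_zero_of_toReal ?_
    rw [cond_val, ENNReal.toReal_mul, ENNReal.toReal_inv, μm_toReal, μm_toReal]
    simp only [A, Set.mem_compl_iff, Set.mem_setOf_eq, Set.mem_inter_iff, Fintype.sum_prod_type,
      Fintype.sum_bool, w_toReal]
    norm_num
  · rw [setIntegral_cond, setIntegral_μm, μm_toReal]
    simp only [A, Y2if, zf, Set.mem_setOf_eq, Set.mem_inter_iff, Fintype.sum_prod_type,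
      Fintype.sum_bool, w_toReal]
    norm_num
  · rw [setIntegral_cond, setIntegral_μm, cond_val, ENNReal.toReal_mul, ENNReal.toReal_inv,
      μm_toReal, μm_toReal]
    simp only [A, Y2if, zf, Set.mem_compl_iff, Set.mem_setOf_eq, Set.mem_inter_iff,
      Fintype.sum_prod_type, Fintype.sum_bool, w_toReal]
    norm_num
lemma cec_ff :
    (∀ ω ∈ A, ((μm[|{ω' : Om | ω'.1 = false ∧ ω'.2.1 = false}])[(fun ω' => Y2if ω' - zf ω') |
        MeasurableSpace.comap Xf inferInstance]) ω = 0) ∧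
    (∀ ω ∈ Aᶜ, ((μm[|{ω' : Om | ω'.1 = false ∧ ω'.2.1 = false}])[(fun ω' => Y2if ω' - zf ω') |
        MeasurableSpace.comap Xf inferInstance]) ω = 0) := by
  classical
  have hC : μm {ω' : Om | ω'.1 = false ∧ ω'.2.1 = false} ≠ 0 := by
    refine ne_zero_of_toReal ?_
    rw [μm_toReal]
    simp only [Set.mem_setOf_eq, Fintype.sum_prod_type, Fintype.sum_bool, w_toReal]
    norm_num
  haveI := cond_isProbabilityMeasure (μ := μm) hC
  refine condexp_two_atoms hGle _ hA𝒢 hatoms ?_ ?_ Integrable.of_finite ?_ ?_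
  · refine ne_zero_of_toReal ?_
    rw [cond_val, ENNReal.toReal_mul, ENNReal.toReal_inv, μm_toReal, μm_toReal]
    simp only [A, Set.mem_setOf_eq, Set.mem_inter_iff, Fintype.sum_prod_type, Fintype.sum_bool,
      w_toReal]
    norm_num
  · refine ne_zero_of_toReal ?_
    rw [cond_val, ENNReal.toReal_mul, ENNReal.toReal_inv, μm_toReal, μm_toReal]
    simp only [A, Set.mem_compl_iff, Set.mem_setOf_eq, Set.mem_inter_iff, Fintype.sum_prod_type,
      Fintype.sum_bool, w_toReal]
    norm_num
  · rw [setIntegral_cond, setIntegral_μm, μm_toReal]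
    simp only [A, Y2if, zf, Set.mem_setOf_eq, Set.mem_inter_iff, Fintype.sum_prod_type,
      Fintype.sum_bool, w_toReal]
    norm_num
  · rw [setIntegral_cond, setIntegral_μm, cond_val, ENNReal.toReal_mul, ENNReal.toReal_inv,
      μm_toReal, μm_toReal]
    simp only [A, Y2if, zf, Set.mem_compl_iff, Set.mem_setOf_eq, Set.mem_inter_iff,
      Fintype.sum_prod_type, Fintype.sum_bool, w_toReal]
    norm_num

end DDDcex

/-- A two-period DDD data-generating process with a real-valued covariate `X`
of finite support, `S ∈ {2, ∞}` (with `∞` coded as `⊤ : ℕ∞`) and `Q ∈ {0,1}`,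
satisfying strong overlap, no anticipation, and the conditional DDD parallel
trends assumption, on which the difference of the two covariate-adjusted DiD
estimands `θ_{S=2} − θ_{S=∞}` differs from `ATT(2,2)`. -/
structure DiffTwoDiDsCounterexample (Ω : Type) [MeasurableSpace Ω] where
  /-- the probability measure -/
  μ : Measure Ω
  isProb : IsProbabilityMeasure μ
  /-- the enabling-group variable, `S ∈ {2, ∞}` -/
  S : Ω → ℕ∞
  hS : Measurable S
  hSval : ∀ ω, S ω = 2 ∨ S ω = ⊤
  /-- the eligibility indicator, `Q ∈ {0,1}` -/
  Q : Ω → ℕ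
  hQ : Measurable Q
  hQval : ∀ ω, Q ω ≤ 1
  /-- a real-valued covariate with finite support -/
  X : Ω → ℝ
  hX : Measurable X
  hXfin : (Set.range X).Finite
  /-- potential outcomes `Y_1(2), Y_1(∞), Y_2(2), Y_2(∞)` -/
  Y1trt : Ω → ℝ
  Y1inf : Ω → ℝ
  Y2trt : Ω → ℝ
  Y2inf : Ω → ℝ
  hY1trt : Integrable Y1trt μ
  hY1inf : Integrable Y1inf μ
  hY2trt : Integrable Y2trt μ
  hY2inf : Integrable Y2inf μ
  /-- observed outcomes: `Y_1 = Y_1(∞)`, and `Y_2 = Y_2(2)` if `S=2, Q=1`,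
  `Y_2 = Y_2(∞)` otherwise -/
  Y1 : Ω → ℝ
  Y2 : Ω → ℝ
  hY1 : ∀ ω, Y1 ω = Y1inf ω
  hY2 : ∀ ω, Y2 ω = if S ω = 2 ∧ Q ω = 1 then Y2trt ω else Y2inf ω
  /-- all four cells have positive probability -/
  hcells : ∀ g ∈ ({2, ⊤} : Finset ℕ∞), ∀ q ≤ 1, 0 < μ {ω | S ω = g ∧ Q ω = q}
  /-- strong overlap: `P(S=g, Q=q | X) > ε` a.s. for all cells -/
  overlap : ∃ ε > (0 : ℝ), ∀ g ∈ ({2, ⊤} : Finset ℕ∞), ∀ q ≤ 1,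
    ∀ᵐ ω ∂μ, ε < (μ[Set.indicator {ω' | S ω' = g ∧ Q ω' = q} (fun _ => (1 : ℝ)) |
        MeasurableSpace.comap X inferInstance]) ω
  /-- no anticipation: `E[Y_1(2) | S=2, Q=1, X] = E[Y_1(∞) | S=2, Q=1, X]` a.s. -/
  hNA : ((μ[|{ω | S ω = 2 ∧ Q ω = 1}])[Y1trt | MeasurableSpace.comap X inferInstance])
      =ᵐ[μ]
    ((μ[|{ω | S ω = 2 ∧ Q ω = 1}])[Y1inf | MeasurableSpace.comap X inferInstance])
  /-- conditional DDD parallel trends -/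
  hPT :
    (fun ω =>
        ((μ[|{ω' | S ω' = 2 ∧ Q ω' = 1}])[(fun ω' => Y2inf ω' - Y1inf ω') |
            MeasurableSpace.comap X inferInstance]) ω
          - ((μ[|{ω' | S ω' = 2 ∧ Q ω' = 0}])[(fun ω' => Y2inf ω' - Y1inf ω') |
              MeasurableSpace.comap X inferInstance]) ω)
      =ᵐ[μ]
    (fun ω =>
        ((μ[|{ω' | S ω' = ⊤ ∧ Q ω' = 1}])[(fun ω' => Y2inf ω' - Y1inf ω') |
            MeasurableSpace.comap X inferInstance]) ω
          - ((μ[|{ω' | S ω' = ⊤ ∧ Q ω' = 0}])[(fun ω' => Y2inf ω' - Y1inf ω') |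
              MeasurableSpace.comap X inferInstance]) ω)
  /-- the difference of the two covariate-adjusted DiD estimands
  `θ_{S=2} − θ_{S=∞}` differs from `ATT(2,2)`, where
  `θ_{S=2} = E[Y_2 − Y_1 − E[Y_2 − Y_1 | X, S=2, Q=0] | S=2, Q=1]` and
  `θ_{S=∞} = E[Y_2 − Y_1 − E[Y_2 − Y_1 | X, S=∞, Q=0] | S=∞, Q=1]` -/
  hfail :
    (∫ ω, (Y2 ω - Y1 ω
        - ((μ[|{ω' | S ω' = 2 ∧ Q ω' = 0}])[(fun ω' => Y2 ω' - Y1 ω') |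
            MeasurableSpace.comap X inferInstance]) ω)
        ∂(μ[|{ω' | S ω' = 2 ∧ Q ω' = 1}]))
      - (∫ ω, (Y2 ω - Y1 ω
          - ((μ[|{ω' | S ω' = ⊤ ∧ Q ω' = 0}])[(fun ω' => Y2 ω' - Y1 ω') |
              MeasurableSpace.comap X inferInstance]) ω)
          ∂(μ[|{ω' | S ω' = ⊤ ∧ Q ω' = 1}]))
    ≠ ∫ ω, (Y2trt ω - Y2inf ω) ∂(μ[|{ω' | S ω' = 2 ∧ Q ω' = 1}])

/-- **Failure of the difference-of-two-DiDs characterization of DDD under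
covariate-conditional parallel trends (Section 3.1, Remark 1).**  There exist a
probability space and random variables `(Y_1, Y_2, S, Q, X)` with `X` real-valued
of finite support, satisfying strong overlap, no anticipation, and conditional
DDD parallel trends, such that `θ_{S=2} − θ_{S=∞} ≠ ATT(2,2)`. -/
theorem difference_of_two_DiDs_can_fail :
    ∃ (Ω : Type) (m : MeasurableSpace Ω), Nonempty (@DiffTwoDiDsCounterexample Ω m) := by
  refine ⟨DDDcex.Om, inferInstance, ⟨?_⟩⟩
  refine
  { μ := DDDcex.μm
    isProb := inferInstance
    S := DDDcex.Sf
    hS := measurable_of_countable _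
    hSval := fun ω => by cases h : ω.1 <;> simp [DDDcex.Sf, h]
    Q := DDDcex.Qf
    hQ := measurable_of_countable _
    hQval := fun ω => by cases h : ω.2.1 <;> simp [DDDcex.Qf, h]
    X := DDDcex.Xf
    hX := DDDcex.hXm
    hXfin := Set.finite_range _
    Y1trt := DDDcex.zf
    Y1inf := DDDcex.zf
    Y2trt := DDDcex.Y2if
    Y2inf := DDDcex.Y2if
    hY1trt := Integrable.of_finite
    hY1inf := Integrable.of_finite
    hY2trt := Integrable.of_finite
    hY2inf := Integrable.of_finite
    Y1 := DDDcex.zf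
    Y2 := DDDcex.Y2if
    hY1 := fun _ => rfl
    hY2 := fun ω => (ite_self _).symm
    hcells := ?_
    overlap := ?_
    hNA := Filter.EventuallyEq.rfl
    hPT := ?_
    hfail := ?_ }
  · -- hcells
    intro g hg q hq
    rcases Finset.mem_insert.mp hg with rfl | hg'
    · rcases Nat.le_one_iff_eq_zero_or_eq_one.mp hq with rfl | rfl
      · rw [DDDcex.cell20]
        refine pos_iff_ne_zero.mpr (DDDcex.ne_zero_of_toReal ?_)
        classical
        rw [DDDcex.μm_toReal]
        simp only [Set.mem_setOf_eq, Fintype.sum_prod_type, Fintype.sum_bool, DDDcex.w_toReal]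
        norm_num
      · rw [DDDcex.cell21]
        refine pos_iff_ne_zero.mpr (DDDcex.ne_zero_of_toReal ?_)
        classical
        rw [DDDcex.μm_toReal]
        simp only [Set.mem_setOf_eq, Fintype.sum_prod_type, Fintype.sum_bool, DDDcex.w_toReal]
        norm_num
    · obtain rfl := Finset.mem_singleton.mp hg'
      rcases Nat.le_one_iff_eq_zero_or_eq_one.mp hq with rfl | rfl
      · rw [DDDcex.cellT0]
        refine pos_iff_ne_zero.mpr (DDDcex.ne_zero_of_toReal ?_)
        classical
        rw [DDDcex.μm_toReal]
        simp only [Set.mem_setOf_eq, Fintype.sum_prod_type, Fintype.sum_bool, DDDcex.w_toReal]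
        norm_num
      · rw [DDDcex.cellT1]
        refine pos_iff_ne_zero.mpr (DDDcex.ne_zero_of_toReal ?_)
        classical
        rw [DDDcex.μm_toReal]
        simp only [Set.mem_setOf_eq, Fintype.sum_prod_type, Fintype.sum_bool, DDDcex.w_toReal]
        norm_num
  · -- overlap
    refine ⟨1/8, by norm_num, ?_⟩
    intro g hg q hq
    rcases Finset.mem_insert.mp hg with rfl | hg'
    · rcases Nat.le_one_iff_eq_zero_or_eq_one.mp hq with rfl | rfl
      · rw [DDDcex.cell20]
        refine Filter.Eventually.of_forall fun ω => ?_
        by_cases hω : ω ∈ DDDcex.A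
        · rw [DDDcex.ceo_tf.1 ω hω]; norm_num
        · rw [DDDcex.ceo_tf.2 ω hω]; norm_num
      · rw [DDDcex.cell21]
        refine Filter.Eventually.of_forall fun ω => ?_
        by_cases hω : ω ∈ DDDcex.A
        · rw [DDDcex.ceo_tt.1 ω hω]; norm_num
        · rw [DDDcex.ceo_tt.2 ω hω]; norm_num
    · obtain rfl := Finset.mem_singleton.mp hg'
      rcases Nat.le_one_iff_eq_zero_or_eq_one.mp hq with rfl | rfl
      · rw [DDDcex.cellT0]
        refine Filter.Eventually.of_forall fun ω => ?_
        by_cases hω : ω ∈ DDDcex.A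
        · rw [DDDcex.ceo_ff.1 ω hω]; norm_num
        · rw [DDDcex.ceo_ff.2 ω hω]; norm_num
      · rw [DDDcex.cellT1]
        refine Filter.Eventually.of_forall fun ω => ?_
        by_cases hω : ω ∈ DDDcex.A
        · rw [DDDcex.ceo_ft.1 ω hω]; norm_num
        · rw [DDDcex.ceo_ft.2 ω hω]; norm_num
  · -- hPT
    rw [DDDcex.cell21, DDDcex.cell20, DDDcex.cellT1, DDDcex.cellT0]
    refine Filter.Eventually.of_forall fun ω => ?_
    by_cases hω : ω ∈ DDDcex.A
    · simp only [DDDcex.cec_tt.1 ω hω, DDDcex.cec_tf.1 ω hω, DDDcex.cec_ft.1 ω hω,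
        DDDcex.cec_ff.1 ω hω]
    · simp only [DDDcex.cec_tt.2 ω hω, DDDcex.cec_tf.2 ω hω, DDDcex.cec_ft.2 ω hω,
        DDDcex.cec_ff.2 ω hω]
  · -- hfail
    rw [DDDcex.cell21, DDDcex.cell20, DDDcex.cellT1, DDDcex.cellT0]
    have h20 : ∀ ω, ((DDDcex.μm[|{ω' : DDDcex.Om | ω'.1 = true ∧ ω'.2.1 = false}])[
        (fun ω' => DDDcex.Y2if ω' - DDDcex.zf ω') |
        MeasurableSpace.comap DDDcex.Xf inferInstance]) ω = 0 := fun ω => by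
      by_cases hω : ω ∈ DDDcex.A
      exacts [DDDcex.cec_tf.1 ω hω, DDDcex.cec_tf.2 ω hω]
    have hT0 : ∀ ω, ((DDDcex.μm[|{ω' : DDDcex.Om | ω'.1 = false ∧ ω'.2.1 = false}])[
        (fun ω' => DDDcex.Y2if ω' - DDDcex.zf ω') |
        MeasurableSpace.comap DDDcex.Xf inferInstance]) ω = 0 := fun ω => by
      by_cases hω : ω ∈ DDDcex.A
      exacts [DDDcex.cec_ff.1 ω hω, DDDcex.cec_ff.2 ω hω]
    have hfun1 : (fun ω => DDDcex.Y2if ω - DDDcex.zf ω -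
        ((DDDcex.μm[|{ω' : DDDcex.Om | ω'.1 = true ∧ ω'.2.1 = false}])[
          (fun ω' => DDDcex.Y2if ω' - DDDcex.zf ω') |
          MeasurableSpace.comap DDDcex.Xf inferInstance]) ω)
        = (fun ω => DDDcex.Y2if ω) := funext fun ω => by rw [h20 ω]; simp [DDDcex.zf]
    have hfun2 : (fun ω => DDDcex.Y2if ω - DDDcex.zf ω -
        ((DDDcex.μm[|{ω' : DDDcex.Om | ω'.1 = false ∧ ω'.2.1 = false}])[
          (fun ω' => DDDcex.Y2if ω' - DDDcex.zf ω') |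
          MeasurableSpace.comap DDDcex.Xf inferInstance]) ω)
        = (fun ω => DDDcex.Y2if ω) := funext fun ω => by rw [hT0 ω]; simp [DDDcex.zf]
    rw [show (∫ ω, (DDDcex.Y2if ω - DDDcex.zf ω -
        ((DDDcex.μm[|{ω' : DDDcex.Om | ω'.1 = true ∧ ω'.2.1 = false}])[
          (fun ω' => DDDcex.Y2if ω' - DDDcex.zf ω') |
          MeasurableSpace.comap DDDcex.Xf inferInstance]) ω)
        ∂(DDDcex.μm[|{ω' : DDDcex.Om | ω'.1 = true ∧ ω'.2.1 = true}]))
      = ∫ ω, DDDcex.Y2if ω ∂(DDDcex.μm[|{ω' : DDDcex.Om | ω'.1 = true ∧ ω'.2.1 = true}])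
      from by rw [hfun1]]
    rw [show (∫ ω, (DDDcex.Y2if ω - DDDcex.zf ω -
        ((DDDcex.μm[|{ω' : DDDcex.Om | ω'.1 = false ∧ ω'.2.1 = false}])[
          (fun ω' => DDDcex.Y2if ω' - DDDcex.zf ω') |
          MeasurableSpace.comap DDDcex.Xf inferInstance]) ω)
        ∂(DDDcex.μm[|{ω' : DDDcex.Om | ω'.1 = false ∧ ω'.2.1 = true}]))
      = ∫ ω, DDDcex.Y2if ω ∂(DDDcex.μm[|{ω' : DDDcex.Om | ω'.1 = false ∧ ω'.2.1 = true}])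
      from by rw [hfun2]]
    classical
    rw [DDDcex.integral_cond, DDDcex.integral_cond, DDDcex.setIntegral_μm, DDDcex.setIntegral_μm,
      DDDcex.μm_toReal, DDDcex.μm_toReal]
    simp only [sub_self, integral_zero, DDDcex.Y2if, Set.mem_setOf_eq, Fintype.sum_prod_type,
      Fintype.sum_bool, DDDcex.w_toReal]
    norm_num
end
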